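/- arXiv:2601.03010 — 6 statements merged into one kernel-verified Lean document; each statement's English description precedes it below -/
import Mathlib

section
/- In the generalized eigenvalue setting below, let ξ > 0, let f : ℝ^N → ℝ, and let u⋆ ∈ ℝ^N be a global minimizer of u ↦ f(u) + ξ‖u‖_A². Let L⋆ ≥ 0 satisfy |f(u) − f(u')| ≤ L⋆‖u − u'‖_M for all u, u' with ‖u‖_M ≤ ‖u⋆‖_M and ‖u'‖_M ≤ ‖u⋆‖_M. If λ_{m+1} > 0, then ‖u⋆ − P_W u⋆‖_A ≤ L⋆/(ξ·√(λ_{m+1})) and ‖u⋆ − P_W u⋆‖_M ≤ L⋆/(ξ·λ_{m+1}). -/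
/-!
Write `e = u⋆ - P u⋆`. Since `A φᵢ = λᵢ M φᵢ`, the `M`-orthogonality of `e` to `W` is also
`A`-orthogonality, so `‖u⋆‖_A² = ‖P u⋆‖_A² + ‖e‖_A²` and `‖P u⋆‖_M ≤ ‖u⋆‖_M`. Comparing `u⋆`
with the competitor `P u⋆` gives `ξ ‖e‖_A² ≤ f (P u⋆) - f u⋆ ≤ L⋆ ‖e‖_M`, while expanding `e` in
the eigenbasis, where only the coefficients with `i ≥ m` survive, gives
`λ_{m+1} ‖e‖_M² ≤ ‖e‖_A²`. The two bounds follow by eliminating one norm or the other.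
-/

open Matrix

section GeneralizedEigenbasis

variable {n : Type*} [Fintype n] [DecidableEq n] {M A : Matrix n n ℝ} {φ : n → n → ℝ}

/-- With `B` the matrix of rows `φ i`, orthonormality says `B M Bᵀ = 1`; hence `B` is invertible
and `Bᵀ (B Mᵀ) = 1`, which is the expansion read entrywise. -/
theorem eq_sum_smul_of_orthonormal
    (hortho : ∀ i j, φ i ⬝ᵥ M *ᵥ φ j = if i = j then 1 else 0) (v : n → ℝ) :
    v = ∑ i, (v ⬝ᵥ M *ᵥ φ i) • φ i := by
  set B : Matrix n n ℝ := Matrix.of φ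
  have hB : B * M * Bᵀ = 1 := by
    ext i j
    rw [one_apply, ← hortho, dotProduct_mulVec]
    rfl
  have hB' : Bᵀ * (B * Mᵀ) = 1 :=
    mul_eq_one_comm.mp (by simpa [Matrix.mul_assoc] using congrArg transpose hB)
  calc v = Bᵀ *ᵥ (B *ᵥ (v ᵥ* M)) := by
        rw [← mulVec_transpose, mulVec_mulVec, mulVec_mulVec, Matrix.mul_assoc, hB', one_mulVec]
    _ = ∑ i, (v ⬝ᵥ M *ᵥ φ i) • φ i := by
      rw [mulVec_transpose, vecMul_eq_sum]
      congr! 2 with i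
      exact (dotProduct_comm _ _).trans (dotProduct_mulVec _ _ _).symm

theorem dotProduct_mulVec_self_eq_sum_of_orthonormal
    (hortho : ∀ i j, φ i ⬝ᵥ M *ᵥ φ j = if i = j then 1 else 0) (S : Matrix n n ℝ) (v : n → ℝ) :
    v ⬝ᵥ S *ᵥ v = ∑ i, (v ⬝ᵥ M *ᵥ φ i) * (v ⬝ᵥ S *ᵥ φ i) := by
  nth_rewrite 2 [eq_sum_smul_of_orthonormal hortho v]
  simp only [mulVec_sum, mulVec_smul, dotProduct_sum, dotProduct_smul, smul_eq_mul]

theorem mul_dotProduct_mulVec_self_le_of_orthonormal {lam : n → ℝ}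
    (hortho : ∀ i j, φ i ⬝ᵥ M *ᵥ φ j = if i = j then 1 else 0)
    (heig : ∀ i, A *ᵥ φ i = lam i • M *ᵥ φ i) {μ : ℝ} {v : n → ℝ}
    (hv : ∀ i, lam i < μ → v ⬝ᵥ M *ᵥ φ i = 0) :
    μ * (v ⬝ᵥ M *ᵥ v) ≤ v ⬝ᵥ A *ᵥ v := by
  rw [dotProduct_mulVec_self_eq_sum_of_orthonormal hortho M,
    dotProduct_mulVec_self_eq_sum_of_orthonormal hortho A, Finset.mul_sum]
  refine Finset.sum_le_sum fun i _ => ?_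
  rw [heig, dotProduct_smul, smul_eq_mul]
  rcases lt_or_ge (lam i) μ with hi | hi
  · simp [hv i hi]
  · nlinarith [mul_self_nonneg (v ⬝ᵥ M *ᵥ φ i)]

end GeneralizedEigenbasis

section QuadraticForms

variable {n : Type*} [Fintype n] {S : Matrix n n ℝ}

theorem dotProduct_mulVec_add_add_of_isSymm (hS : S.IsSymm) {x y : n → ℝ}
    (h : y ⬝ᵥ S *ᵥ x = 0) :
    (x + y) ⬝ᵥ S *ᵥ (x + y) = x ⬝ᵥ S *ᵥ x + y ⬝ᵥ S *ᵥ y := by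
  have hxy : x ⬝ᵥ S *ᵥ y = y ⬝ᵥ S *ᵥ x := by
    rw [dotProduct_mulVec, ← mulVec_transpose, hS.eq, dotProduct_comm]
  simp only [add_dotProduct, mulVec_add, dotProduct_add, hxy, h]
  ring

theorem dotProduct_mulVec_eq_zero_of_mem_span [DecidableEq n] {v : n → ℝ} {T : Set (n → ℝ)}
    (h : ∀ w ∈ T, v ⬝ᵥ S *ᵥ w = 0) {w : n → ℝ} (hw : w ∈ Submodule.span ℝ T) :
    v ⬝ᵥ S *ᵥ w = 0 := by
  have hle : Submodule.span ℝ T ≤ LinearMap.ker (toLinearMap₂' ℝ S v) :=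
    Submodule.span_le.2 fun w hw => by simpa [toLinearMap₂'_apply'] using h w hw
  simpa [toLinearMap₂'_apply'] using hle hw

end QuadraticForms

theorem le_div_of_mul_sq_le_mul {c L x : ℝ} (hc : 0 < c) (hL : 0 ≤ L) (hx : 0 ≤ x)
    (h : c * x ^ 2 ≤ L * x) : x ≤ L / c := by
  rw [le_div_iff₀ hc]
  rcases hx.eq_or_lt with rfl | hx
  · simpa using hL
  · nlinarith

theorem sqrt_le_div_of_mul_le_of_mul_le_mul_sqrt {ξ μ L a b : ℝ} (hξ : 0 < ξ) (hμ : 0 < μ)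
    (hL : 0 ≤ L) (hb : 0 ≤ b) (hba : μ * b ≤ a) (hab : ξ * a ≤ L * √b) :
    √a ≤ L / (ξ * √μ) ∧ √b ≤ L / (ξ * μ) := by
  have ha : 0 ≤ a := (mul_nonneg hμ.le hb).trans hba
  have hsqrt : √μ * √b ≤ √a := by
    rw [← Real.sqrt_mul hμ.le]
    exact Real.sqrt_le_sqrt hba
  constructor
  · refine le_div_of_mul_sq_le_mul (by positivity) hL (Real.sqrt_nonneg _) ?_
    calc ξ * √μ * √a ^ 2 = √μ * (ξ * a) := by rw [Real.sq_sqrt ha]; ring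
      _ ≤ √μ * (L * √b) := by gcongr
      _ = L * (√μ * √b) := by ring
      _ ≤ L * √a := by gcongr
  · refine le_div_of_mul_sq_le_mul (by positivity) hL (Real.sqrt_nonneg _) ?_
    calc ξ * μ * √b ^ 2 = ξ * (μ * b) := by rw [Real.sq_sqrt hb]; ring
      _ ≤ ξ * a := by gcongr
      _ ≤ L * √b := hab

theorem truncated_basis_projection_bounds_general
    (N : ℕ)
    (M A : Matrix (Fin N) (Fin N) ℝ)
    (hMsymm : M.IsSymm) (hAsymm : A.IsSymm)
    (hMpd : M.PosDef)
    (φ : Fin N → (Fin N → ℝ)) (lam : Fin N → ℝ)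
    (hortho : ∀ i j, φ i ⬝ᵥ M.mulVec (φ j) = if i = j then 1 else 0)
    (heig : ∀ i, A.mulVec (φ i) = lam i • M.mulVec (φ i))
    (hlam_mono : Monotone lam)
    (m : ℕ) (hmN : m < N)
    (W : Submodule ℝ (Fin N → ℝ))
    (hW : W = Submodule.span ℝ {w : Fin N → ℝ | ∃ i : Fin N, (i : ℕ) < m ∧ w = φ i})
    (P : (Fin N → ℝ) → (Fin N → ℝ))
    (hP_mem : ∀ u, P u ∈ W)
    (hP_orth : ∀ u, ∀ w ∈ W, (u - P u) ⬝ᵥ M.mulVec w = 0)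
    (ξ : ℝ) (hξ : 0 < ξ)
    (f : (Fin N → ℝ) → ℝ)
    (ustar : Fin N → ℝ)
    (hmin : ∀ u, f ustar + ξ * (ustar ⬝ᵥ A.mulVec ustar) ≤ f u + ξ * (u ⬝ᵥ A.mulVec u))
    (Lstar : ℝ) (hLstar : 0 ≤ Lstar)
    (hLip : ∀ u u' : Fin N → ℝ,
      Real.sqrt (u ⬝ᵥ M.mulVec u) ≤ Real.sqrt (ustar ⬝ᵥ M.mulVec ustar) →
      Real.sqrt (u' ⬝ᵥ M.mulVec u') ≤ Real.sqrt (ustar ⬝ᵥ M.mulVec ustar) →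
      |f u - f u'| ≤ Lstar * Real.sqrt ((u - u') ⬝ᵥ M.mulVec (u - u')))
    (hlam_pos : 0 < lam ⟨m, hmN⟩) :
    Real.sqrt ((ustar - P ustar) ⬝ᵥ A.mulVec (ustar - P ustar)) ≤
      Lstar / (ξ * Real.sqrt (lam ⟨m, hmN⟩)) ∧
    Real.sqrt ((ustar - P ustar) ⬝ᵥ M.mulVec (ustar - P ustar)) ≤
      Lstar / (ξ * lam ⟨m, hmN⟩) := by
  set e := ustar - P ustar
  have hu : P ustar + e = ustar := add_sub_cancel _ _
  have hφW : ∀ i : Fin N, (i : ℕ) < m → φ i ∈ W :=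
    fun i hi => hW ▸ Submodule.subset_span ⟨i, hi, rfl⟩
  have heM : ∀ w ∈ W, e ⬝ᵥ M *ᵥ w = 0 := hP_orth ustar
  have heA : e ⬝ᵥ A *ᵥ P ustar = 0 := by
    refine dotProduct_mulVec_eq_zero_of_mem_span ?_ (hW ▸ hP_mem ustar)
    rintro _ ⟨i, hi, rfl⟩
    rw [heig, dotProduct_smul, heM _ (hφW i hi), smul_zero]
  have hRayleigh : lam ⟨m, hmN⟩ * (e ⬝ᵥ M *ᵥ e) ≤ e ⬝ᵥ A *ᵥ e :=
    mul_dotProduct_mulVec_self_le_of_orthonormal hortho heig fun i hi =>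
      heM _ (hφW i (hlam_mono.reflect_lt hi))
  have hA_split := dotProduct_mulVec_add_add_of_isSymm hAsymm heA
  have hM_split := dotProduct_mulVec_add_add_of_isSymm hMsymm (heM _ (hP_mem ustar))
  rw [hu] at hA_split hM_split
  have he_nonneg : 0 ≤ e ⬝ᵥ M *ᵥ e := by simpa using hMpd.posSemidef.dotProduct_mulVec_nonneg e
  have hPu_le : √(P ustar ⬝ᵥ M *ᵥ P ustar) ≤ √(ustar ⬝ᵥ M *ᵥ ustar) :=
    Real.sqrt_le_sqrt (by linarith)
  have hkey : ξ * (e ⬝ᵥ A *ᵥ e) ≤ Lstar * √(e ⬝ᵥ M *ᵥ e) :=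
    calc ξ * (e ⬝ᵥ A *ᵥ e) ≤ f (P ustar) - f ustar := by
          have h := hmin (P ustar)
          rw [hA_split, mul_add] at h
          linarith
      _ ≤ |f ustar - f (P ustar)| := by rw [abs_sub_comm]; exact le_abs_self _
      _ ≤ Lstar * √(e ⬝ᵥ M *ᵥ e) := hLip _ _ le_rfl hPu_le
  exact sqrt_le_div_of_mul_le_of_mul_le_mul_sqrt hξ hlam_pos hLstar he_nonneg hRayleigh hkey

/-- In the generalized eigenvalue setting (M symmetric positive definite, A symmetric
positive semidefinite, `φᵢᵀ M φⱼ = δᵢⱼ`, `A φᵢ = λᵢ M φᵢ`, `0 ≤ λ₁ ≤ … ≤ λ_N`,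
`W = span(φ₁,…,φ_m)`, `P` the M-orthogonal projection onto `W`), if `u⋆` is a global
minimizer of `u ↦ f u + ξ‖u‖_A²`, `L⋆` is a Lipschitz constant for `f` on the
`‖·‖_M`-ball of radius `‖u⋆‖_M`, and `λ_{m+1} > 0`, then
`‖u⋆ - P u⋆‖_A ≤ L⋆/(ξ √λ_{m+1})` and `‖u⋆ - P u⋆‖_M ≤ L⋆/(ξ λ_{m+1})`. -/
theorem truncated_basis_projection_bounds
    (N : ℕ) (hN : 1 ≤ N)
    (M A : Matrix (Fin N) (Fin N) ℝ)
    (hMsymm : M.IsSymm) (hAsymm : A.IsSymm)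
    (hMpd : M.PosDef) (hApsd : A.PosSemidef)
    (φ : Fin N → (Fin N → ℝ)) (lam : Fin N → ℝ)
    (hortho : ∀ i j, φ i ⬝ᵥ M.mulVec (φ j) = if i = j then 1 else 0)
    (heig : ∀ i, A.mulVec (φ i) = lam i • M.mulVec (φ i))
    (hlam_nonneg : ∀ i, 0 ≤ lam i)
    (hlam_mono : Monotone lam)
    (m : ℕ) (hm : 1 ≤ m) (hmN : m < N)
    (W : Submodule ℝ (Fin N → ℝ))
    (hW : W = Submodule.span ℝ {w : Fin N → ℝ | ∃ i : Fin N, (i : ℕ) < m ∧ w = φ i})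
    (P : (Fin N → ℝ) → (Fin N → ℝ))
    (hP_mem : ∀ u, P u ∈ W)
    (hP_orth : ∀ u, ∀ w ∈ W, (u - P u) ⬝ᵥ M.mulVec w = 0)
    (ξ : ℝ) (hξ : 0 < ξ)
    (f : (Fin N → ℝ) → ℝ)
    (ustar : Fin N → ℝ)
    (hmin : ∀ u, f ustar + ξ * (ustar ⬝ᵥ A.mulVec ustar) ≤ f u + ξ * (u ⬝ᵥ A.mulVec u))
    (Lstar : ℝ) (hLstar : 0 ≤ Lstar)
    (hLip : ∀ u u' : Fin N → ℝ,
      Real.sqrt (u ⬝ᵥ M.mulVec u) ≤ Real.sqrt (ustar ⬝ᵥ M.mulVec ustar) →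
      Real.sqrt (u' ⬝ᵥ M.mulVec u') ≤ Real.sqrt (ustar ⬝ᵥ M.mulVec ustar) →
      |f u - f u'| ≤ Lstar * Real.sqrt ((u - u') ⬝ᵥ M.mulVec (u - u')))
    (hlam_pos : 0 < lam ⟨m, hmN⟩) :
    Real.sqrt ((ustar - P ustar) ⬝ᵥ A.mulVec (ustar - P ustar)) ≤
      Lstar / (ξ * Real.sqrt (lam ⟨m, hmN⟩)) ∧
    Real.sqrt ((ustar - P ustar) ⬝ᵥ M.mulVec (ustar - P ustar)) ≤
      Lstar / (ξ * lam ⟨m, hmN⟩) :=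
  truncated_basis_projection_bounds_general N M A hMsymm hAsymm hMpd φ lam hortho heig hlam_mono m
    hmN W hW P hP_mem hP_orth ξ hξ f ustar hmin Lstar hLstar hLip hlam_pos
end

section
/- In the generalized eigenvalue setting below, let ξ > 0, let f : ℝ^N → ℝ, and let u⋆ ∈ ℝ^N be a global minimizer of g(u) := f(u) + ξ‖u‖_A². Let L⋆ ≥ 0 satisfy |f(u) − f(u')| ≤ L⋆‖u − u'‖_M for all u, u' with ‖u‖_M ≤ ‖u⋆‖_M and ‖u'‖_M ≤ ‖u⋆‖_M. Set 𝔈 := inf_{u∈ℝ^N} g(u) = g(u⋆) and 𝔈_m := inf_{u∈W} g(u). If λ_{m+1} > 0, then 0 ≤ 𝔈_m − 𝔈 ≤ (L⋆)²/(ξ·λ_{m+1}). -/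
/-!
Expand `u⋆` in the `M`-orthonormal eigenbasis and let `v ∈ W` be its truncation to the first `m`
modes. Then `‖v‖_M ≤ ‖u⋆‖_M`, so the Lipschitz bound applies to `f v - f u⋆`, while the
discarded tail `r = u⋆ - v` only involves eigenvalues `≥ λ_{m+1}`, so
`‖u⋆‖_A² - ‖v‖_A² ≥ λ_{m+1} ‖r‖_M²`. With `t = ‖r‖_M` this gives
`𝔈_m - 𝔈 ≤ g v - g u⋆ ≤ L⋆ t - ξ λ_{m+1} t²`, and the right-hand side is at most
`L⋆² / (ξ λ_{m+1})` whatever `t` is.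
-/

open Matrix

section GeneralizedEigenbasis

variable {ι n : Type*} [Fintype ι] [DecidableEq ι] [Fintype n] {M A : Matrix n n ℝ}
  {φ : ι → n → ℝ} {lam : ι → ℝ}

theorem sum_smul_dotProduct_mulVec_sum_smul_of_eigen
    (hortho : ∀ i j, φ i ⬝ᵥ M *ᵥ φ j = if i = j then 1 else 0)
    (heig : ∀ i, A *ᵥ φ i = lam i • M *ᵥ φ i) (a b : ι → ℝ) :
    (∑ i, a i • φ i) ⬝ᵥ A *ᵥ (∑ i, b i • φ i) = ∑ i, lam i * (a i * b i) := by
  simp only [mulVec_sum, mulVec_smul, heig, sum_dotProduct, dotProduct_sum, smul_dotProduct,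
    dotProduct_smul, hortho, smul_eq_mul, mul_ite, mul_one, mul_zero, Finset.sum_ite_eq',
    Finset.mem_univ, if_true]
  exact Finset.sum_congr rfl fun i _ => by ring

theorem sum_smul_dotProduct_mulVec_sum_smul
    (hortho : ∀ i j, φ i ⬝ᵥ M *ᵥ φ j = if i = j then 1 else 0) (a b : ι → ℝ) :
    (∑ i, a i • φ i) ⬝ᵥ M *ᵥ (∑ i, b i • φ i) = ∑ i, a i * b i := by
  simpa using sum_smul_dotProduct_mulVec_sum_smul_of_eigen (lam := 1) hortho
    (fun i => (one_smul ℝ _).symm) a b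

theorem linearIndependent_of_dotProduct_mulVec_eq_ite
    (hortho : ∀ i j, φ i ⬝ᵥ M *ᵥ φ j = if i = j then 1 else 0) : LinearIndependent ℝ φ := by
  rw [Fintype.linearIndependent_iff]
  intro c hc j
  simpa [sum_dotProduct, hortho] using congrArg (· ⬝ᵥ M *ᵥ φ j) hc

theorem span_range_eq_top_of_dotProduct_mulVec_eq_ite
    (hortho : ∀ i j, φ i ⬝ᵥ M *ᵥ φ j = if i = j then 1 else 0)
    (hcard : Fintype.card ι = Fintype.card n) : Submodule.span ℝ (Set.range φ) = ⊤ :=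
  (linearIndependent_of_dotProduct_mulVec_eq_ite hortho).span_eq_top_of_card_eq_finrank'
    (by simpa using hcard)

theorem exists_sum_smul_eq_of_dotProduct_mulVec_eq_ite
    (hortho : ∀ i j, φ i ⬝ᵥ M *ᵥ φ j = if i = j then 1 else 0)
    (hcard : Fintype.card ι = Fintype.card n) (u : n → ℝ) : ∃ c : ι → ℝ, ∑ i, c i • φ i = u :=
  (Submodule.mem_span_range_iff_exists_fun ℝ).mp
    ((span_range_eq_top_of_dotProduct_mulVec_eq_ite hortho hcard).ge Submodule.mem_top)

theorem dotProduct_mulVec_self_nonneg_of_dotProduct_mulVec_eq_ite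
    (hortho : ∀ i j, φ i ⬝ᵥ M *ᵥ φ j = if i = j then 1 else 0)
    (hcard : Fintype.card ι = Fintype.card n) (u : n → ℝ) : 0 ≤ u ⬝ᵥ M *ᵥ u := by
  obtain ⟨c, rfl⟩ := exists_sum_smul_eq_of_dotProduct_mulVec_eq_ite hortho hcard u
  rw [sum_smul_dotProduct_mulVec_sum_smul hortho]
  exact Finset.sum_nonneg fun i _ => mul_self_nonneg (c i)

theorem exists_mem_span_image_Iio_spectral_gap [LinearOrder ι]
    (hortho : ∀ i j, φ i ⬝ᵥ M *ᵥ φ j = if i = j then 1 else 0)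
    (heig : ∀ i, A *ᵥ φ i = lam i • M *ᵥ φ i) (hmono : Monotone lam)
    (hcard : Fintype.card ι = Fintype.card n) (k : ι) (u : n → ℝ) :
    ∃ v ∈ Submodule.span ℝ (φ '' Set.Iio k),
      v ⬝ᵥ M *ᵥ v ≤ u ⬝ᵥ M *ᵥ u ∧
      lam k * ((u - v) ⬝ᵥ M *ᵥ (u - v)) ≤ u ⬝ᵥ A *ᵥ u - v ⬝ᵥ A *ᵥ v := by
  obtain ⟨c, rfl⟩ := exists_sum_smul_eq_of_dotProduct_mulVec_eq_ite hortho hcard u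
  set a : ι → ℝ := fun i => if i < k then c i else 0
  set b : ι → ℝ := fun i => if i < k then 0 else c i
  have hsub : ∑ i, c i • φ i - ∑ i, a i • φ i = ∑ i, b i • φ i := by
    rw [← Finset.sum_sub_distrib]
    refine Finset.sum_congr rfl fun i _ => ?_
    by_cases hi : i < k <;> simp [a, b, hi]
  refine ⟨∑ i, a i • φ i, Submodule.sum_mem _ fun i _ => ?_, ?_, ?_⟩
  · by_cases hi : i < k
    · exact Submodule.smul_mem _ _ (Submodule.subset_span ⟨i, hi, rfl⟩)
    · simp [a, hi]
  · rw [sum_smul_dotProduct_mulVec_sum_smul hortho, sum_smul_dotProduct_mulVec_sum_smul hortho]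
    refine Finset.sum_le_sum fun i _ => ?_
    by_cases hi : i < k <;> simp [a, hi, mul_self_nonneg]
  · rw [hsub, sum_smul_dotProduct_mulVec_sum_smul hortho,
      sum_smul_dotProduct_mulVec_sum_smul_of_eigen hortho heig,
      sum_smul_dotProduct_mulVec_sum_smul_of_eigen hortho heig, Finset.mul_sum,
      ← Finset.sum_sub_distrib]
    refine Finset.sum_le_sum fun i _ => ?_
    by_cases hi : i < k
    · simp [a, b, hi]
    · simpa [a, b, hi] using
        mul_le_mul_of_nonneg_right (hmono (not_lt.mp hi)) (mul_self_nonneg (c i))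

end GeneralizedEigenbasis

theorem mul_sub_mul_sq_le_sq_div {L t a : ℝ} (ha : 0 < a) : L * t - a * t ^ 2 ≤ L ^ 2 / a := by
  rw [le_div_iff₀ ha]
  nlinarith [sq_nonneg (L - 2 * a * t), sq_nonneg L]

theorem truncated_basis_objective_bound_general
    (N : ℕ)
    (M A : Matrix (Fin N) (Fin N) ℝ)
    (φ : Fin N → (Fin N → ℝ)) (lam : Fin N → ℝ)
    (hortho : ∀ i j, φ i ⬝ᵥ M.mulVec (φ j) = if i = j then 1 else 0)
    (heig : ∀ i, A.mulVec (φ i) = lam i • M.mulVec (φ i))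
    (hlam_mono : Monotone lam)
    (m : ℕ) (hmN : m < N)
    (W : Submodule ℝ (Fin N → ℝ))
    (hW : W = Submodule.span ℝ {w : Fin N → ℝ | ∃ i : Fin N, (i : ℕ) < m ∧ w = φ i})
    (ξ : ℝ) (hξ : 0 < ξ)
    (f g : (Fin N → ℝ) → ℝ)
    (hg : ∀ u, g u = f u + ξ * (u ⬝ᵥ A.mulVec u))
    (ustar : Fin N → ℝ)
    (hmin : ∀ u, g ustar ≤ g u)
    (Lstar : ℝ)
    (hLip : ∀ u u' : Fin N → ℝ,
      Real.sqrt (u ⬝ᵥ M.mulVec u) ≤ Real.sqrt (ustar ⬝ᵥ M.mulVec ustar) →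
      Real.sqrt (u' ⬝ᵥ M.mulVec u') ≤ Real.sqrt (ustar ⬝ᵥ M.mulVec ustar) →
      |f u - f u'| ≤ Lstar * Real.sqrt ((u - u') ⬝ᵥ M.mulVec (u - u')))
    (hlam_pos : 0 < lam ⟨m, hmN⟩)
    (Em : ℝ) (hEm : Em = sInf (g '' (W : Set (Fin N → ℝ)))) :
    0 ≤ Em - g ustar ∧ Em - g ustar ≤ Lstar ^ 2 / (ξ * lam ⟨m, hmN⟩) := by
  obtain ⟨v, hvW, hvM, hgap⟩ :=
    exists_mem_span_image_Iio_spectral_gap hortho heig hlam_mono rfl ⟨m, hmN⟩ ustar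
  have hW' : W = Submodule.span ℝ (φ '' Set.Iio ⟨m, hmN⟩) := by
    rw [hW]
    congr 1
    ext w
    simp [Fin.lt_def, eq_comm]
  have hlb : g ustar ∈ lowerBounds (g '' W) := by
    rintro _ ⟨u, -, rfl⟩
    exact hmin u
  have hEm_le : Em ≤ g v := hEm ▸ csInf_le ⟨_, hlb⟩ ⟨v, hW' ▸ hvW, rfl⟩
  have hle_Em : g ustar ≤ Em := hEm ▸ le_csInf ⟨g 0, 0, W.zero_mem, rfl⟩ hlb
  set t := Real.sqrt ((ustar - v) ⬝ᵥ M *ᵥ (ustar - v))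
  have hf : f v - f ustar ≤ Lstar * t := by
    have h := hLip v ustar (Real.sqrt_le_sqrt hvM) le_rfl
    rw [← neg_sub ustar v, mulVec_neg, neg_dotProduct_neg] at h
    exact (le_abs_self _).trans h
  have ht : t ^ 2 = (ustar - v) ⬝ᵥ M *ᵥ (ustar - v) :=
    Real.sq_sqrt (dotProduct_mulVec_self_nonneg_of_dotProduct_mulVec_eq_ite hortho rfl _)
  refine ⟨by linarith, ?_⟩
  calc Em - g ustar ≤ Lstar * t - ξ * lam ⟨m, hmN⟩ * t ^ 2 := by
        rw [ht]
        linarith [hg v, hg ustar, mul_le_mul_of_nonneg_left hgap hξ.le]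
    _ ≤ Lstar ^ 2 / (ξ * lam ⟨m, hmN⟩) := mul_sub_mul_sq_le_sq_div (mul_pos hξ hlam_pos)

/-- In the generalized eigenvalue setting, with `g u = f u + ξ‖u‖_A²`, `u⋆` a global
minimizer of `g`, `L⋆` a Lipschitz constant for `f` on the `‖·‖_M`-ball of radius
`‖u⋆‖_M`, `𝔈 = g u⋆` and `𝔈_m = inf_{u ∈ W} g u`, if `λ_{m+1} > 0` then
`0 ≤ 𝔈_m - 𝔈 ≤ (L⋆)²/(ξ λ_{m+1})`. -/
theorem truncated_basis_objective_bound
    (N : ℕ) (hN : 1 ≤ N)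
    (M A : Matrix (Fin N) (Fin N) ℝ)
    (hMsymm : M.IsSymm) (hAsymm : A.IsSymm)
    (hMpd : M.PosDef) (hApsd : A.PosSemidef)
    (φ : Fin N → (Fin N → ℝ)) (lam : Fin N → ℝ)
    (hortho : ∀ i j, φ i ⬝ᵥ M.mulVec (φ j) = if i = j then 1 else 0)
    (heig : ∀ i, A.mulVec (φ i) = lam i • M.mulVec (φ i))
    (hlam_nonneg : ∀ i, 0 ≤ lam i)
    (hlam_mono : Monotone lam)
    (m : ℕ) (hm : 1 ≤ m) (hmN : m < N)
    (W : Submodule ℝ (Fin N → ℝ))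
    (hW : W = Submodule.span ℝ {w : Fin N → ℝ | ∃ i : Fin N, (i : ℕ) < m ∧ w = φ i})
    (ξ : ℝ) (hξ : 0 < ξ)
    (f g : (Fin N → ℝ) → ℝ)
    (hg : ∀ u, g u = f u + ξ * (u ⬝ᵥ A.mulVec u))
    (ustar : Fin N → ℝ)
    (hmin : ∀ u, g ustar ≤ g u)
    (Lstar : ℝ) (hLstar : 0 ≤ Lstar)
    (hLip : ∀ u u' : Fin N → ℝ,
      Real.sqrt (u ⬝ᵥ M.mulVec u) ≤ Real.sqrt (ustar ⬝ᵥ M.mulVec ustar) →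
      Real.sqrt (u' ⬝ᵥ M.mulVec u') ≤ Real.sqrt (ustar ⬝ᵥ M.mulVec ustar) →
      |f u - f u'| ≤ Lstar * Real.sqrt ((u - u') ⬝ᵥ M.mulVec (u - u')))
    (hlam_pos : 0 < lam ⟨m, hmN⟩)
    (Em : ℝ) (hEm : Em = sInf (g '' (W : Set (Fin N → ℝ)))) :
    0 ≤ Em - g ustar ∧ Em - g ustar ≤ Lstar ^ 2 / (ξ * lam ⟨m, hmN⟩) :=
  truncated_basis_objective_bound_general N M A φ lam hortho heig hlam_mono m hmN W hW ξ hξ f g hg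
    ustar hmin Lstar hLip hlam_pos Em hEm
end

section
/- Let B denote the open unit ball {x ∈ ℝ² : ‖x‖₂ < 1}. There exists a map Φ : B → B such that: (i) Φ is a bijection from B onto B; (ii) Φ is continuously differentiable on B; (iii) there exists a continuous map X : B × [0,1] → B with X(ξ,0) = ξ and X(ξ,1) = Φ(ξ) for all ξ ∈ B, such that for every t ∈ [0,1] the map ξ ↦ X(ξ,t) is a continuously differentiable bijection of B onto B (so Φ is isotopic to the identity through diffeomorphisms of the open ball); and (iv) there is no continuous map g : closure(B) → ℝ² with g(ξ) = Φ(ξ) for all ξ ∈ B, i.e. Φ admits no continuous extension to the closed ball. -/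
/-!
Identify the plane with `ℂ` and rotate each circle `‖z‖ = r` by the angle `t / (1 - r²)`.
For every `t` this is a smooth bijection of the open disc (rotating back inverts it), it depends
continuously on `t`, and it is the identity for `t = 0`. For `t = 1` the angle tends to `∞` as
`r → 1`, so along the radius towards `1` the image winds around the circle forever and has no limit.
-/

open Metric Set Complex Filter Topology

-- The angle depends on `‖z‖ ^ 2` rather than `‖z‖` so that a smooth `θ` gives a map smooth at `0`.
noncomputable def twist (θ : ℝ → ℝ) : Equiv.Perm ℂ where
  toFun z := exp (θ (‖z‖ ^ 2) * I) * z
  invFun z := exp (-θ (‖z‖ ^ 2) * I) * z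
  left_inv z := by
    dsimp only
    rw [norm_mul, norm_exp_ofReal_mul_I, one_mul, ← mul_assoc, ← exp_add]; simp
  right_inv z := by
    dsimp only
    rw [norm_mul, ← ofReal_neg, norm_exp_ofReal_mul_I, one_mul, ← mul_assoc, ← exp_add]; simp

theorem twist_apply (θ : ℝ → ℝ) (z : ℂ) : twist θ z = exp (θ (‖z‖ ^ 2) * I) * z := rfl

@[simp]
theorem norm_twist (θ : ℝ → ℝ) (z : ℂ) : ‖twist θ z‖ = ‖z‖ := by
  simp [twist_apply, norm_exp_ofReal_mul_I]

theorem twist_zero : twist 0 = 1 := by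
  ext z; simp [twist_apply]

theorem contDiffOn_twist {n : WithTop ℕ∞} {θ : ℝ → ℝ} {s : Set ℂ} {t : Set ℝ}
    (hθ : ContDiffOn ℝ n θ t) (hs : MapsTo (fun z : ℂ => ‖z‖ ^ 2) s t) :
    ContDiffOn ℝ n (twist θ) s := by
  have : ContDiffOn ℝ n (fun z : ℂ => θ (‖z‖ ^ 2)) s :=
    hθ.comp (contDiff_norm_sq ℝ).contDiffOn hs
  exact ((ofRealCLM.contDiff.comp_contDiffOn this).mul contDiffOn_const).cexp.mul contDiffOn_id

theorem bijOn_ball_of_norm_map {E : Type*} [SeminormedAddCommGroup E] (f : Equiv.Perm E)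
    (hf : ∀ x, ‖f x‖ = ‖x‖) (r : ℝ) : BijOn f (ball 0 r) (ball 0 r) :=
  f.bijOn fun x => by simp [hf]

theorem not_tendsto_exp_mul_I_atTop (c : ℂ) :
    ¬ Tendsto (fun T : ℝ => exp (T * I)) atTop (𝓝 c) := by
  intro hc
  have hshift : Tendsto (fun T : ℝ => exp ((T + Real.pi : ℝ) * I)) atTop (𝓝 c) :=
    hc.comp (tendsto_atTop_add_const_right _ Real.pi tendsto_id)
  have hneg : Tendsto (fun T : ℝ => exp ((T + Real.pi : ℝ) * I)) atTop (𝓝 (-c)) := by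
    simpa [add_mul, exp_add] using hc.neg
  have hc0 : c = 0 := by linear_combination (tendsto_nhds_unique hshift hneg) / 2
  have hnorm : 1 = ‖c‖ := by simpa using hc.norm
  simp [hc0] at hnorm

noncomputable def spiral (t : ℝ) : Equiv.Perm ℂ := twist fun s => t / (1 - s)

theorem spiral_zero : spiral 0 = 1 := by
  simp only [spiral, zero_div]
  exact twist_zero

theorem contDiffOn_spiral (n : WithTop ℕ∞) (t : ℝ) : ContDiffOn ℝ n (spiral t) (ball 0 1) := by
  refine contDiffOn_twist (t := Iio 1) ?_ fun z hz => ?_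
  · exact contDiffOn_const.div (contDiffOn_const.sub contDiffOn_id) fun s hs => sub_ne_zero.2 hs.ne'
  · have : ‖z‖ < 1 := mem_ball_zero_iff.1 hz
    simp only [mem_Iio]; nlinarith [norm_nonneg z]

theorem continuousOn_spiral :
    ContinuousOn (fun p : ℂ × ℝ => spiral p.2 p.1) (ball 0 1 ×ˢ univ) := by
  simp only [spiral, twist_apply]
  have : ∀ p ∈ ball (0 : ℂ) 1 ×ˢ (univ : Set ℝ), 1 - ‖p.1‖ ^ 2 ≠ 0 := fun p hp => by
    have : ‖p.1‖ < 1 := mem_ball_zero_iff.1 hp.1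
    nlinarith [norm_nonneg p.1]
  fun_prop (disch := assumption)

theorem not_tendsto_spiral_one (c : ℂ) : ¬ Tendsto (spiral 1) (𝓝[ball 0 1] 1) (𝓝 c) := by
  intro hc
  -- the radius on which `spiral 1` rotates by the angle `T`
  set z : ℝ → ℂ := fun T => (√(1 - T⁻¹) : ℝ)
  have hz_norm_sq : ∀ T, 1 ≤ T → ‖z T‖ ^ 2 = 1 - T⁻¹ := fun T hT => by
    rw [norm_real, Real.norm_eq_abs, sq_abs, Real.sq_sqrt (by simp [inv_le_one_of_one_le₀ hT])]
  have hz : Tendsto z atTop (𝓝[ball 0 1] 1) := by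
    refine tendsto_nhdsWithin_iff.2 ⟨?_, ?_⟩
    · have h : Tendsto (fun T : ℝ => √(1 - T⁻¹)) atTop (𝓝 1) := by
        simpa using (tendsto_inv_atTop_zero.const_sub 1).sqrt
      exact ofReal_one ▸ (continuous_ofReal.tendsto 1).comp h
    · filter_upwards [eventually_gt_atTop 1] with T hT
      rw [mem_ball_zero_iff, ← sq_lt_one_iff₀ (norm_nonneg _), hz_norm_sq T hT.le]
      simpa using zero_lt_one.trans hT
  have hspiral : ∀ᶠ T in atTop, spiral 1 (z T) / z T = exp (T * I) := by
    filter_upwards [eventually_gt_atTop 1] with T hT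
    have hzT : z T ≠ 0 :=
      ofReal_ne_zero.2 (Real.sqrt_pos.2 (sub_pos.2 (inv_lt_one_of_one_lt₀ hT))).ne'
    rw [spiral, twist_apply, hz_norm_sq T hT.le, mul_div_cancel_right₀ _ hzT]
    simp
  apply not_tendsto_exp_mul_I_atTop c
  have h := (hc.comp hz).div (tendsto_nhds_of_tendsto_nhdsWithin hz) one_ne_zero
  rw [div_one] at h
  exact h.congr' hspiral

local notation "ℝ²" => EuclideanSpace ℝ (Fin 2)

noncomputable def planeSpiral (t : ℝ) : Equiv.Perm ℝ² :=
  orthonormalBasisOneI.repr.toLinearEquiv.toEquiv.permCongr (spiral t)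

theorem planeSpiral_apply (t : ℝ) (ξ : ℝ²) :
    planeSpiral t ξ = orthonormalBasisOneI.repr (spiral t (orthonormalBasisOneI.repr.symm ξ)) :=
  rfl

@[simp]
theorem norm_planeSpiral (t : ℝ) (ξ : ℝ²) : ‖planeSpiral t ξ‖ = ‖ξ‖ := by
  simp [planeSpiral_apply, spiral, -orthonormalBasisOneI_repr_symm_apply]

theorem planeSpiral_zero : planeSpiral 0 = 1 := by
  ext1 ξ; simp [planeSpiral_apply, spiral_zero, -orthonormalBasisOneI_repr_symm_apply]

theorem mapsTo_repr_symm_ball :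
    MapsTo orthonormalBasisOneI.repr.symm (ball (0 : ℝ²) 1) (ball 0 1) :=
  fun ξ hξ => by simpa [-orthonormalBasisOneI_repr_symm_apply] using hξ

theorem contDiffOn_planeSpiral (n : WithTop ℕ∞) (t : ℝ) :
    ContDiffOn ℝ n (planeSpiral t) (ball 0 1) :=
  orthonormalBasisOneI.repr.contDiff.comp_contDiffOn <|
    (contDiffOn_spiral n t).comp orthonormalBasisOneI.repr.symm.contDiff.contDiffOn
      mapsTo_repr_symm_ball

theorem continuousOn_planeSpiral :
    ContinuousOn (fun p : ℝ² × ℝ => planeSpiral p.2 p.1) (ball 0 1 ×ˢ univ) := by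
  have hrepr : ContinuousOn (fun p : ℝ² × ℝ => (orthonormalBasisOneI.repr.symm p.1, p.2))
      (ball 0 1 ×ˢ univ) := by fun_prop
  have hspiral :=
    continuousOn_spiral.comp hrepr fun p hp => ⟨mapsTo_repr_symm_ball hp.1, trivial⟩
  exact orthonormalBasisOneI.repr.continuous.comp_continuousOn hspiral

theorem not_tendsto_planeSpiral_one (c : ℝ²) :
    ¬ Tendsto (planeSpiral 1) (𝓝[ball 0 1] orthonormalBasisOneI.repr 1) (𝓝 c) := by
  intro hc
  have hrepr : Tendsto orthonormalBasisOneI.repr (𝓝[ball 0 1] 1)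
      (𝓝[ball 0 1] orthonormalBasisOneI.repr 1) :=
    orthonormalBasisOneI.repr.continuous.continuousWithinAt.tendsto_nhdsWithin
      fun z hz => by simpa using hz
  refine not_tendsto_spiral_one (orthonormalBasisOneI.repr.symm c) ?_
  simpa [Function.comp_def, planeSpiral_apply] using
    (orthonormalBasisOneI.repr.symm.continuous.tendsto c).comp (hc.comp hrepr)

theorem not_exists_continuousOn_closedBall_extension_planeSpiral_one :
    ¬ ∃ g : ℝ² → ℝ², ContinuousOn g (closedBall 0 1) ∧ ∀ ξ ∈ ball 0 1, g ξ = planeSpiral 1 ξ := by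
  rintro ⟨g, hg, hgΦ⟩
  have hmem : orthonormalBasisOneI.repr 1 ∈ closedBall (0 : ℝ²) 1 := by simp
  exact not_tendsto_planeSpiral_one _ <| ((hg _ hmem).mono ball_subset_closedBall).tendsto.congr'
    (eventually_nhdsWithin_of_forall hgΦ)

/-- There exists a `C¹` bijection `Φ` of the open unit ball `B ⊂ ℝ²` onto itself, isotopic
to the identity through `C¹` bijections of `B`, which admits no continuous extension to
the closed unit ball. -/
theorem exists_diffeo_of_open_ball_without_continuous_extension :
    ∃ Φ : EuclideanSpace ℝ (Fin 2) → EuclideanSpace ℝ (Fin 2),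
      Set.BijOn Φ (ball (0 : EuclideanSpace ℝ (Fin 2)) 1)
        (ball (0 : EuclideanSpace ℝ (Fin 2)) 1) ∧
      ContDiffOn ℝ 1 Φ (ball (0 : EuclideanSpace ℝ (Fin 2)) 1) ∧
      (∃ X : EuclideanSpace ℝ (Fin 2) → ℝ → EuclideanSpace ℝ (Fin 2),
        ContinuousOn (fun p : EuclideanSpace ℝ (Fin 2) × ℝ => X p.1 p.2)
          (ball (0 : EuclideanSpace ℝ (Fin 2)) 1 ×ˢ Set.Icc (0:ℝ) 1) ∧
        (∀ ξ ∈ ball (0 : EuclideanSpace ℝ (Fin 2)) 1, ∀ t ∈ Set.Icc (0:ℝ) 1,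
          X ξ t ∈ ball (0 : EuclideanSpace ℝ (Fin 2)) 1) ∧
        (∀ ξ ∈ ball (0 : EuclideanSpace ℝ (Fin 2)) 1, X ξ 0 = ξ ∧ X ξ 1 = Φ ξ) ∧
        (∀ t ∈ Set.Icc (0:ℝ) 1,
          Set.BijOn (fun ξ => X ξ t) (ball (0 : EuclideanSpace ℝ (Fin 2)) 1)
            (ball (0 : EuclideanSpace ℝ (Fin 2)) 1) ∧
          ContDiffOn ℝ 1 (fun ξ => X ξ t) (ball (0 : EuclideanSpace ℝ (Fin 2)) 1))) ∧
      ¬ ∃ g : EuclideanSpace ℝ (Fin 2) → EuclideanSpace ℝ (Fin 2),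
          ContinuousOn g (closedBall (0 : EuclideanSpace ℝ (Fin 2)) 1) ∧
          ∀ ξ ∈ ball (0 : EuclideanSpace ℝ (Fin 2)) 1, g ξ = Φ ξ := by
  have hbij (t : ℝ) := bijOn_ball_of_norm_map (planeSpiral t) (norm_planeSpiral t) 1
  refine ⟨planeSpiral 1, hbij 1, contDiffOn_planeSpiral 1 1,
    ⟨fun ξ t => planeSpiral t ξ, ?_, ?_, ?_, ?_⟩,
    not_exists_continuousOn_closedBall_extension_planeSpiral_one⟩
  · exact continuousOn_planeSpiral.mono (prod_mono subset_rfl (subset_univ _))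
  · exact fun ξ hξ t _ => (hbij t).mapsTo hξ
  · exact fun ξ _ => ⟨by simp [planeSpiral_zero], rfl⟩
  · exact fun t _ => ⟨hbij t, contDiffOn_planeSpiral 1 t⟩
end

section
/- Let n ≥ 2 and let Ω ⊆ ℝⁿ be a nonempty bounded open set whose frontier Σ := frontier(Ω) is connected and locally path-connected. Suppose Σ admits a tubular neighborhood h : Σ × (−1,1) → ℝⁿ (a homeomorphism onto an open neighborhood of Σ with h(x,0) = x for all x ∈ Σ) such that h(Σ × (−1,0)) ⊆ Ω and h(Σ × (0,1)) ∩ closure(Ω) = ∅. Then the complement ℝⁿ \ closure(Ω) is path-connected. -/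
open Set Metric Bornology

/-- `h` is a tubular neighborhood of `S ⊆ ℝⁿ`: a homeomorphism from `S × (-1,1)` onto an
open subset of `ℝⁿ` containing `S`, with `h (x, 0) = x` for every `x ∈ S`. -/
def IsTubularNbhd {n : ℕ} (S : Set (EuclideanSpace ℝ (Fin n)))
    (h : EuclideanSpace ℝ (Fin n) × ℝ → EuclideanSpace ℝ (Fin n)) : Prop :=
  ContinuousOn h (S ×ˢ Ioo (-1:ℝ) 1) ∧
  Set.InjOn h (S ×ˢ Ioo (-1:ℝ) 1) ∧
  IsOpen (h '' (S ×ˢ Ioo (-1:ℝ) 1)) ∧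
  (∀ x ∈ S, h (x, 0) = x) ∧
  ∃ g : EuclideanSpace ℝ (Fin n) → EuclideanSpace ℝ (Fin n) × ℝ,
    ContinuousOn g (h '' (S ×ˢ Ioo (-1:ℝ) 1)) ∧
    ∀ p ∈ S ×ˢ Ioo (-1:ℝ) 1, g (h p) = p

/-- Let `Ω ⊂ ℝⁿ` (`n ≥ 2`) be a nonempty bounded open set whose frontier is connected and
locally path-connected and admits a tubular neighborhood whose negative side lies in `Ω`
and whose positive side avoids `closure Ω`. Then `ℝⁿ \ closure Ω` is path-connected. -/
theorem complement_of_closure_pathConnected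
    (n : ℕ) (hn : 2 ≤ n)
    (Ω : Set (EuclideanSpace ℝ (Fin n)))
    (hne : Ω.Nonempty) (hopen : IsOpen Ω) (hbdd : IsBounded Ω)
    (hconn : IsConnected (frontier Ω))
    (hlpc : LocPathConnectedSpace (frontier Ω))
    (h : EuclideanSpace ℝ (Fin n) × ℝ → EuclideanSpace ℝ (Fin n))
    (htub : IsTubularNbhd (frontier Ω) h)
    (hin : h '' (frontier Ω ×ˢ Ioo (-1:ℝ) 0) ⊆ Ω)
    (hout : h '' (frontier Ω ×ˢ Ioo (0:ℝ) 1) ∩ closure Ω = ∅) :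
    IsPathConnected ((closure Ω)ᶜ) := by
  classical
  set C : Set (EuclideanSpace ℝ (Fin n)) := (closure Ω)ᶜ with hCdef
  have hCopen : IsOpen C := isClosed_closure.isOpen_compl
  set T : Set (EuclideanSpace ℝ (Fin n)) := h '' (frontier Ω ×ˢ Ioo (0:ℝ) 1) with hTdef
  have hTC : T ⊆ C := by
    intro z hz hzc
    have : z ∈ T ∩ closure Ω := ⟨hz, hzc⟩
    rw [hout] at this
    exact this
  have hTconn : IsConnected T := by
    have h1 : IsConnected (frontier Ω ×ˢ Ioo (0:ℝ) 1) :=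
      hconn.prod (isConnected_Ioo (by norm_num))
    exact h1.image h (htub.1.mono (prod_mono_right (Ioo_subset_Ioo (by norm_num) le_rfl)))
  obtain ⟨x₀, hx₀⟩ := hconn.nonempty
  have hz₀T : h (x₀, 1/2) ∈ T := ⟨(x₀, 1/2), ⟨hx₀, by norm_num, by norm_num⟩, rfl⟩
  set z₀ := h (x₀, 1/2) with hz₀def
  have hz₀C : z₀ ∈ C := hTC hz₀T
  have key : ∀ p ∈ C, z₀ ∈ connectedComponentIn C p := by
    intro p hp
    set U := connectedComponentIn C p with hUdef
    have hUopen : IsOpen U := hCopen.connectedComponentIn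
    have hUC : U ⊆ C := connectedComponentIn_subset _ _
    have hpU : p ∈ U := mem_connectedComponentIn hp
    -- U is relatively closed in C
    have hrel : ∀ q ∈ closure U, q ∈ C → q ∈ U := by
      intro q hq hqC
      have hW : IsOpen (connectedComponentIn C q) := hCopen.connectedComponentIn
      have hqW : q ∈ connectedComponentIn C q := mem_connectedComponentIn hqC
      obtain ⟨r, hrW, hrU⟩ := mem_closure_iff.mp hq _ hW hqW
      have h1 : connectedComponentIn C q = connectedComponentIn C r :=
        connectedComponentIn_eq hrW
      have h2 : U = connectedComponentIn C r := connectedComponentIn_eq hrU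
      rw [h2, ← h1]
      exact hqW
    have hUne : U.Nonempty := ⟨p, hpU⟩
    have hUneU : U ≠ univ := by
      obtain ⟨w, hw⟩ := hne
      intro hu
      exact hUC (hu ▸ mem_univ w) (subset_closure hw)
    have hfr : (frontier U).Nonempty := by
      by_contra hf
      rw [not_nonempty_iff_eq_empty] at hf
      rcases (isClopen_iff.mp (isClopen_iff_frontier_eq_empty.mpr hf)) with h1 | h1
      · exact hUne.ne_empty h1
      · exact hUneU h1
    obtain ⟨x, hx⟩ := hfr
    have hxnU : x ∉ U := by
      rw [hUopen.frontier_eq] at hx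
      exact hx.2
    have hxcl : x ∈ closure U := frontier_subset_closure hx
    have hxnC : x ∉ C := fun hxC => hxnU (hrel x hxcl hxC)
    have hxclΩ : x ∈ closure Ω := not_not.mp hxnC
    have hxnΩ : x ∉ Ω := by
      intro hxΩ
      obtain ⟨r, hrΩ, hrU⟩ := mem_closure_iff.mp hxcl _ hopen hxΩ
      exact hUC hrU (subset_closure hrΩ)
    have hxS : x ∈ frontier Ω := by
      rw [hopen.frontier_eq]
      exact ⟨hxclΩ, hxnΩ⟩
    have hVopen : IsOpen (h '' (frontier Ω ×ˢ Ioo (-1:ℝ) 1)) := htub.2.2.1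
    have hxV : x ∈ h '' (frontier Ω ×ˢ Ioo (-1:ℝ) 1) :=
      ⟨(x, 0), ⟨hxS, by norm_num, by norm_num⟩, htub.2.2.2.1 x hxS⟩
    obtain ⟨z, hzV, hzU⟩ := mem_closure_iff.mp hxcl _ hVopen hxV
    obtain ⟨⟨y, t⟩, ⟨hyS, ht⟩, rfl⟩ := hzV
    have hzC : h (y, t) ∈ C := hUC hzU
    have htpos : 0 < t := by
      rcases lt_trichotomy t 0 with h1 | h1 | h1
      · exact absurd (subset_closure (hin ⟨(y, t), ⟨hyS, ht.1, h1⟩, rfl⟩)) hzC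
      · exfalso
        apply hzC
        rw [h1, htub.2.2.2.1 y hyS]
        exact frontier_subset_closure hyS
      · exact h1
    have hzT : h (y, t) ∈ T := ⟨(y, t), ⟨hyS, htpos, ht.2⟩, rfl⟩
    have hTU : T ⊆ U := by
      rw [hUdef, connectedComponentIn_eq hzU]
      exact hTconn.isPreconnected.subset_connectedComponentIn hzT hTC
    exact hTU hz₀T
  have hCsub : C ⊆ connectedComponentIn C z₀ := by
    intro p hp
    have h1 := connectedComponentIn_eq (key p hp)
    rw [← h1]
    exact mem_connectedComponentIn hp
  have hCconn : IsConnected C := by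
    have hEq : C = connectedComponentIn C z₀ :=
      Subset.antisymm hCsub (connectedComponentIn_subset _ _)
    rw [hEq]
    exact isConnected_connectedComponentIn_iff.mpr hz₀C
  exact hCopen.isConnected_iff_isPathConnected.mp hCconn
end

section
/- Let n ≥ 2 and let Ω ⊆ ℝⁿ be a bounded connected open set whose frontier has finitely many connected components Σ₀, Σ₁, …, Σ_k. Assume that each Σᵢ is locally flat and admits a tubular neighborhood, and that ℝⁿ \ Σᵢ has exactly two connected components, exactly one of which is bounded; denote by Dᵢ the bounded connected component of ℝⁿ \ Σᵢ. Then there is an index i⋆ with Ω ⊆ D_{i⋆}; and, after renumbering the components so that i⋆ = 0: closure(Dᵢ) ∩ closure(Dⱼ) = ∅ for all 1 ≤ i < j ≤ k; closure(Dᵢ) ⊆ D₀ for i = 1,…,k; and Ω = D₀ \ ⋃_{i=1}^k closure(Dᵢ). -/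
open Set Metric Bornology

/-- The hyperplane `ℝ^{n-1} × {0}` (last coordinate zero) in `ℝⁿ`. -/
def lastCoordZero (n : ℕ) (hn : 0 < n) : Set (EuclideanSpace ℝ (Fin n)) :=
  {z : EuclideanSpace ℝ (Fin n) | z ⟨n - 1, Nat.sub_lt hn one_pos⟩ = 0}

/-- A set `S ⊆ ℝⁿ` is locally flat if every `x ∈ S` has an open neighborhood `N` in `ℝⁿ`
and a homeomorphism `φ` of `N` onto an open set `V` such that
`φ (N ∩ S) = φ(N) ∩ (ℝ^{n-1} × {0})`. -/
def IsLocallyFlat {n : ℕ} (hn : 0 < n) (S : Set (EuclideanSpace ℝ (Fin n))) : Prop :=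
  ∀ x ∈ S, ∃ N V : Set (EuclideanSpace ℝ (Fin n)),
    IsOpen N ∧ x ∈ N ∧ IsOpen V ∧
    ∃ φ : N ≃ₜ V, ∀ y : N,
      ((y : EuclideanSpace ℝ (Fin n)) ∈ S ↔
        (φ y : EuclideanSpace ℝ (Fin n)) ∈ lastCoordZero n hn)

lemma aux_closure_subset {n : ℕ} {S D U : Set (EuclideanSpace ℝ (Fin n))}
    (hUo : IsOpen U) (hdisj : Disjoint D U) (hcompl : Sᶜ = D ∪ U) :
    closure D ⊆ D ∪ S := by
  intro y hy
  by_cases hyS : y ∈ S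
  · exact Or.inr hyS
  · have hyDU : y ∈ D ∪ U := by rw [← hcompl]; exact hyS
    rcases hyDU with hyD | hyU
    · exact Or.inl hyD
    · exfalso
      have h1 : U ∩ closure D ⊆ closure (U ∩ D) := hUo.inter_closure
      have h2 : U ∩ D = ∅ := hdisj.symm.inter_eq
      rw [h2, closure_empty] at h1
      exact h1 ⟨hyU, hy⟩

lemma aux_frontier_nonempty {n : ℕ} {D : Set (EuclideanSpace ℝ (Fin n))}
    (hDo : IsOpen D) (hDne : D.Nonempty) (hcne : Dᶜ.Nonempty) :
    (frontier D).Nonempty := by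
  haveI : PreconnectedSpace (EuclideanSpace ℝ (Fin n)) :=
    ⟨(convex_univ : Convex ℝ (univ : Set (EuclideanSpace ℝ (Fin n)))).isPreconnected⟩
  by_contra hfe
  rw [not_nonempty_iff_eq_empty] at hfe
  have hclosed : IsClosed D := by
    apply isClosed_of_closure_subset
    intro x hx
    by_contra hxD
    have : x ∈ frontier D := ⟨hx, by rwa [hDo.interior_eq]⟩
    rw [hfe] at this; exact this
  have := (IsClopen.eq_univ ⟨hclosed, hDo⟩ hDne)
  obtain ⟨y, hy⟩ := hcne
  exact hy (this ▸ mem_univ y)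

lemma tube_side_collars {n : ℕ} {S D U K : Set (EuclideanSpace ℝ (Fin n))}
    (hScomp : IsCompact S) (hSconn : IsConnected S)
    (hDo : IsOpen D) (hDne : D.Nonempty)
    (hUo : IsOpen U) (hUne : U.Nonempty)
    (hdisj : Disjoint D U) (hcompl : Sᶜ = D ∪ U)
    (hK : IsClosed K) (hKS : Disjoint S K)
    (h : EuclideanSpace ℝ (Fin n) × ℝ → EuclideanSpace ℝ (Fin n))
    (hh : IsTubularNbhd S h) :
    ∃ P Q W : Set (EuclideanSpace ℝ (Fin n)),
      IsOpen W ∧ S ⊆ W ∧ W ⊆ P ∪ S ∪ Q ∧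
      IsPreconnected P ∧ IsPreconnected Q ∧
      P ⊆ D ∧ Q ⊆ U ∧ Disjoint P K ∧ Disjoint Q K ∧
      S ⊆ closure P ∧ S ⊆ closure Q := by
  obtain ⟨hcont, hinj, hWo1, hfix, g, hgcont, hginv⟩ := hh
  have hSne : S.Nonempty := hSconn.nonempty
  obtain ⟨δ, hδ, hthick⟩ := hKS.exists_thickenings hScomp hK
  have hIccsub : S ×ˢ Icc (-(1/2):ℝ) (1/2) ⊆ S ×ˢ Ioo (-1:ℝ) 1 := by
    apply prod_mono_right
    intro t ht
    exact ⟨by linarith [ht.1], by linarith [ht.2]⟩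
  have hC : IsCompact (S ×ˢ Icc (-(1/2):ℝ) (1/2)) := hScomp.prod isCompact_Icc
  have huc := hC.uniformContinuousOn_of_continuous (hcont.mono hIccsub)
  rw [Metric.uniformContinuousOn_iff] at huc
  obtain ⟨δ', hδ', hd'⟩ := huc δ hδ
  set ε : ℝ := min (δ'/2) (1/4) with hεdef
  have hεpos : 0 < ε := lt_min (by linarith) (by norm_num)
  have hε14 : ε ≤ 1/4 := min_le_right _ _
  have hεδ : ε < δ' := lt_of_le_of_lt (min_le_left _ _) (by linarith)
  have hJIcc : Ioo (-ε) ε ⊆ Icc (-(1/2):ℝ) (1/2) := fun t ht =>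
    ⟨by linarith [ht.1], by linarith [ht.2]⟩
  have hJIoo : Ioo (-ε) ε ⊆ Ioo (-1:ℝ) 1 := fun t ht =>
    ⟨by linarith [ht.1], by linarith [ht.2]⟩
  have hPsub : Ioo (0:ℝ) ε ⊆ Ioo (-ε) ε := fun t ht => ⟨by linarith [ht.1], ht.2⟩
  have hQsub : Ioo (-ε) (0:ℝ) ⊆ Ioo (-ε) ε := fun t ht => ⟨ht.1, by linarith [ht.2]⟩
  -- points of the thin tube with t ≠ 0 are not in S; all points avoid K
  have havoid : ∀ x ∈ S, ∀ t ∈ Ioo (-ε) ε, h (x, t) ∉ K := by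
    intro x hx t ht hk
    have h1 : (x, t) ∈ S ×ˢ Icc (-(1/2):ℝ) (1/2) := ⟨hx, hJIcc ht⟩
    have h0 : (x, (0:ℝ)) ∈ S ×ˢ Icc (-(1/2):ℝ) (1/2) := ⟨hx, by norm_num⟩
    have hdist : dist (x, t) (x, (0:ℝ)) < δ' := by
      rw [Prod.dist_eq]
      simp only [dist_self]
      rw [max_eq_right dist_nonneg, Real.dist_eq, sub_zero, abs_lt]
      exact ⟨by linarith [ht.1], by linarith [ht.2]⟩
    have hlt := hd' _ h1 _ h0 hdist
    rw [hfix x hx] at hlt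
    have hmem : h (x, t) ∈ thickening δ S := mem_thickening_iff.mpr ⟨x, hx, hlt⟩
    exact hthick.le_bot ⟨hmem, self_subset_thickening hδ K hk⟩
  have hnotS : ∀ x ∈ S, ∀ t ∈ Ioo (-ε) ε, t ≠ 0 → h (x, t) ∉ S := by
    intro x hx t ht ht0 hyS
    have h1 : (x, t) ∈ S ×ˢ Ioo (-1:ℝ) 1 := ⟨hx, hJIoo ht⟩
    have h2 : (h (x, t), (0:ℝ)) ∈ S ×ˢ Ioo (-1:ℝ) 1 := ⟨hyS, by norm_num⟩
    have heq : h (x, t) = h (h (x, t), (0:ℝ)) := (hfix _ hyS).symm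
    have := hinj h1 h2 heq
    exact ht0 (congrArg Prod.snd this)
  -- images of open sub-intervals are open
  have himg : ∀ J : Set ℝ, J ⊆ Ioo (-1:ℝ) 1 →
      h '' (S ×ˢ J) = (h '' (S ×ˢ Ioo (-1:ℝ) 1)) ∩ g ⁻¹' ((univ : Set _) ×ˢ J) := by
    intro J hJ
    ext y
    constructor
    · rintro ⟨p, ⟨hp1, hp2⟩, rfl⟩
      have hpT : p ∈ S ×ˢ Ioo (-1:ℝ) 1 := ⟨hp1, hJ hp2⟩
      refine ⟨⟨p, hpT, rfl⟩, ?_⟩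
      rw [mem_preimage, hginv p hpT]
      exact ⟨trivial, hp2⟩
    · rintro ⟨⟨p, hpT, rfl⟩, hy⟩
      rw [mem_preimage, hginv p hpT] at hy
      exact ⟨p, ⟨hpT.1, hy.2⟩, rfl⟩
  have hopenJ : ∀ J : Set ℝ, IsOpen J → J ⊆ Ioo (-1:ℝ) 1 → IsOpen (h '' (S ×ˢ J)) := by
    intro J hJo hJs
    rw [himg J hJs]
    exact hgcont.isOpen_inter_preimage hWo1 (isOpen_univ.prod hJo)
  set P₀ := h '' (S ×ˢ Ioo (0:ℝ) ε) with hP₀def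
  set Q₀ := h '' (S ×ˢ Ioo (-ε) (0:ℝ)) with hQ₀def
  set W := h '' (S ×ˢ Ioo (-ε) ε) with hWdef
  have hWo : IsOpen W := hopenJ _ isOpen_Ioo (hJIoo)
  have hSW : S ⊆ W := fun x hx =>
    ⟨(x, 0), ⟨hx, ⟨neg_neg_of_pos hεpos, hεpos⟩⟩, hfix x hx⟩
  have hWcover : W ⊆ P₀ ∪ S ∪ Q₀ := by
    rintro y ⟨⟨x, t⟩, ⟨hx, ht⟩, rfl⟩
    rcases lt_trichotomy t 0 with h0 | h0 | h0
    · exact Or.inr ⟨(x, t), ⟨hx, ⟨ht.1, h0⟩⟩, rfl⟩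
    · subst h0
      exact Or.inl (Or.inr (by rw [hfix x hx]; exact hx))
    · exact Or.inl (Or.inl ⟨(x, t), ⟨hx, ⟨h0, ht.2⟩⟩, rfl⟩)
  have hPpc : IsPreconnected P₀ :=
    (hSconn.isPreconnected.prod isPreconnected_Ioo).image h
      (hcont.mono (prod_mono_right (hPsub.trans hJIoo)))
  have hQpc : IsPreconnected Q₀ :=
    (hSconn.isPreconnected.prod isPreconnected_Ioo).image h
      (hcont.mono (prod_mono_right (hQsub.trans hJIoo)))
  have hPnotS : ∀ y ∈ P₀, y ∉ S := by
    rintro y ⟨⟨x, t⟩, ⟨hx, ht⟩, rfl⟩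
    exact hnotS x hx t (hPsub ht) (ne_of_gt ht.1)
  have hQnotS : ∀ y ∈ Q₀, y ∉ S := by
    rintro y ⟨⟨x, t⟩, ⟨hx, ht⟩, rfl⟩
    exact hnotS x hx t (hQsub ht) (ne_of_lt ht.2)
  have hPDU : P₀ ⊆ D ∪ U := fun y hy => by
    rw [← hcompl]; exact hPnotS y hy
  have hQDU : Q₀ ⊆ D ∪ U := fun y hy => by
    rw [← hcompl]; exact hQnotS y hy
  have hPK : Disjoint P₀ K := by
    rw [Set.disjoint_left]
    rintro y ⟨⟨x, t⟩, ⟨hx, ht⟩, rfl⟩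
    exact havoid x hx t (hPsub ht)
  have hQK : Disjoint Q₀ K := by
    rw [Set.disjoint_left]
    rintro y ⟨⟨x, t⟩, ⟨hx, ht⟩, rfl⟩
    exact havoid x hx t (hQsub ht)
  -- S is in the closure of each side
  have hclside : ∀ J : Set ℝ, J ⊆ Ioo (-1:ℝ) 1 → (0:ℝ) ∈ closure J →
      S ⊆ closure (h '' (S ×ˢ J)) := by
    intro J hJ h0J x hx
    have hcw : ContinuousWithinAt h (S ×ˢ J) (x, 0) :=
      (hcont (x, 0) ⟨hx, by norm_num⟩).mono (prod_mono_right hJ)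
    have hmem : ((x, (0:ℝ))) ∈ closure (S ×ˢ J) := by
      rw [closure_prod_eq]
      exact ⟨subset_closure hx, h0J⟩
    have := hcw.mem_closure_image hmem
    rwa [hfix x hx] at this
  have hclP : S ⊆ closure P₀ := by
    apply hclside _ (hPsub.trans hJIoo)
    rw [closure_Ioo (ne_of_lt hεpos)]
    exact ⟨le_refl _, hεpos.le⟩
  have hclQ : S ⊆ closure Q₀ := by
    apply hclside _ (hQsub.trans hJIoo)
    rw [closure_Ioo (ne_of_lt (neg_neg_of_pos hεpos))]
    exact ⟨(neg_neg_of_pos hεpos).le, le_refl _⟩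
  have hPne : P₀.Nonempty := by
    obtain ⟨x, hx⟩ := hSne
    exact closure_nonempty_iff.mp ⟨x, hclP hx⟩
  have hQne : Q₀.Nonempty := by
    obtain ⟨x, hx⟩ := hSne
    exact closure_nonempty_iff.mp ⟨x, hclQ hx⟩
  -- determine which side lies in D and which in U
  have hsideD : P₀ ⊆ D ∨ Q₀ ⊆ D := by
    obtain ⟨x₀, hx₀⟩ := aux_frontier_nonempty hDo hDne
      ⟨(hUne).choose, fun hc => hdisj.le_bot ⟨hc, hUne.choose_spec⟩⟩
    have hx₀S : x₀ ∈ S := by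
      have h1 : x₀ ∈ closure D := frontier_subset_closure hx₀
      have h2 : x₀ ∉ D := by
        intro hd
        exact hx₀.2 (by rwa [hDo.interior_eq])
      rcases aux_closure_subset hUo hdisj hcompl h1 with hd | hs
      · exact absurd hd h2
      · exact hs
    have hx₀W : x₀ ∈ W := hSW hx₀S
    obtain ⟨y, hyW, hyD⟩ :=
      (_root_.mem_closure_iff.mp (frontier_subset_closure hx₀)) W hWo hx₀W
    have hyS : y ∉ S := fun hyS => hdisj.le_bot ⟨hyD, by
      exact absurd hyS (fun hh => (by
        have : y ∈ Sᶜ := by rw [hcompl]; exact Or.inl hyD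
        exact this hh))⟩
    rcases hWcover hyW with (hyP | hyS') | hyQ
    · left
      exact hPpc.subset_left_of_subset_union hDo hUo hdisj hPDU ⟨y, hyP, hyD⟩
    · exact absurd hyS' hyS
    · right
      exact hQpc.subset_left_of_subset_union hDo hUo hdisj hQDU ⟨y, hyQ, hyD⟩
  have hsideU : P₀ ⊆ U ∨ Q₀ ⊆ U := by
    obtain ⟨x₀, hx₀⟩ := aux_frontier_nonempty hUo hUne
      ⟨(hDne).choose, fun hc => hdisj.le_bot ⟨hDne.choose_spec, hc⟩⟩
    have hx₀S : x₀ ∈ S := by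
      have h1 : x₀ ∈ closure U := frontier_subset_closure hx₀
      have h2 : x₀ ∉ U := by
        intro hd
        exact hx₀.2 (by rwa [hUo.interior_eq])
      rcases aux_closure_subset hDo hdisj.symm (by rw [hcompl, union_comm]) h1 with hd | hs
      · exact absurd hd h2
      · exact hs
    have hx₀W : x₀ ∈ W := hSW hx₀S
    obtain ⟨y, hyW, hyU⟩ :=
      (_root_.mem_closure_iff.mp (frontier_subset_closure hx₀)) W hWo hx₀W
    have hyS : y ∉ S := fun hyS => (by
      have : y ∈ Sᶜ := by rw [hcompl]; exact Or.inr hyU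
      exact this hyS)
    rcases hWcover hyW with (hyP | hyS') | hyQ
    · left
      exact hPpc.subset_left_of_subset_union hUo hDo hdisj.symm
        (fun z hz => (hPDU hz).symm.imp id id |>.symm.elim (fun h => Or.inr h) (fun h => Or.inl h))
        ⟨y, hyP, hyU⟩
    · exact absurd hyS' hyS
    · right
      exact hQpc.subset_left_of_subset_union hUo hDo hdisj.symm
        (fun z hz => (hQDU hz).symm.imp id id |>.symm.elim (fun h => Or.inr h) (fun h => Or.inl h))
        ⟨y, hyQ, hyU⟩
  rcases hsideD with hPD | hQD <;> rcases hsideU with hPU | hQU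
  · exfalso
    obtain ⟨y, hy⟩ := hPne
    exact hdisj.le_bot ⟨hPD hy, hPU hy⟩
  · exact ⟨P₀, Q₀, W, hWo, hSW, hWcover, hPpc, hQpc, hPD, hQU, hPK, hQK, hclP, hclQ⟩
  · refine ⟨Q₀, P₀, W, hWo, hSW, ?_, hQpc, hPpc, hQD, hPU, hQK, hPK, hclQ, hclP⟩
    intro y hy
    rcases hWcover hy with (hyP | hyS') | hyQ
    · exact Or.inr hyP
    · exact Or.inl (Or.inr hyS')
    · exact Or.inl (Or.inl hyQ)
  · exfalso
    obtain ⟨y, hy⟩ := hQne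
    exact hdisj.le_bot ⟨hQD hy, hQU hy⟩

/-- Characterization of bounded connected open sets with continuous boundary (Lemma on the
structure of `Ω`): if the frontier of `Ω` has finitely many connected components
`Σ₀, …, Σ_k`, each locally flat, admitting a tubular neighborhood, and whose complement
has exactly two connected components with exactly one bounded (denoted `D i`), then
there is `i⋆` with `Ω ⊆ D i⋆`, the closures of the other `D i` are pairwise disjoint and
contained in `D i⋆`, and `Ω = D i⋆ \ ⋃_{i ≠ i⋆} closure (D i)`. -/
theorem structure_of_domain_with_continuous_boundary
    (n k : ℕ) (hn : 2 ≤ n)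
    (Ω : Set (EuclideanSpace ℝ (Fin n)))
    (hopen : IsOpen Ω) (hconn : IsConnected Ω) (hbdd : IsBounded Ω)
    (S : Fin (k+1) → Set (EuclideanSpace ℝ (Fin n)))
    (hSconn : ∀ i, IsConnected (S i))
    (hSsub : ∀ i, S i ⊆ frontier Ω)
    (hSmax : ∀ i, ∀ s, IsConnected s → s ⊆ frontier Ω → S i ⊆ s → s = S i)
    (hSdisj : ∀ i j, i ≠ j → Disjoint (S i) (S j))
    (hScover : (⋃ i, S i) = frontier Ω)
    (hflat : ∀ i, IsLocallyFlat (by omega : 0 < n) (S i))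
    (htub : ∀ i, ∃ h, IsTubularNbhd (S i) h)
    (D : Fin (k+1) → Set (EuclideanSpace ℝ (Fin n)))
    (hD : ∀ i, IsOpen (D i) ∧ IsConnected (D i) ∧ IsBounded (D i) ∧
      ∃ U : Set (EuclideanSpace ℝ (Fin n)),
        IsOpen U ∧ IsConnected U ∧ ¬ IsBounded U ∧
        Disjoint (D i) U ∧ (S i)ᶜ = D i ∪ U) :
    ∃ istar : Fin (k+1),
      Ω ⊆ D istar ∧
      (∀ i j, i ≠ istar → j ≠ istar → i ≠ j →
        Disjoint (closure (D i)) (closure (D j))) ∧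
      (∀ i, i ≠ istar → closure (D i) ⊆ D istar) ∧
      Ω = D istar \ ⋃ i ∈ {i : Fin (k+1) | i ≠ istar}, closure (D i) := by
  classical
  choose U hUo hUconn hUunb hUdisj hUcompl using fun i => (hD i).2.2.2
  have hDo : ∀ i, IsOpen (D i) := fun i => (hD i).1
  have hDc : ∀ i, IsConnected (D i) := fun i => (hD i).2.1
  have hDb : ∀ i, IsBounded (D i) := fun i => (hD i).2.2.1
  have hΩne : Ω.Nonempty := hconn.nonempty
  haveI : Nonempty (Fin n) := ⟨⟨0, by omega⟩⟩
  haveI : PreconnectedSpace (EuclideanSpace ℝ (Fin n)) :=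
    ⟨(convex_univ : Convex ℝ (univ : Set (EuclideanSpace ℝ (Fin n)))).isPreconnected⟩
  have huniv : ¬ IsBounded (univ : Set (EuclideanSpace ℝ (Fin n))) :=
    NormedSpace.unbounded_univ ℝ _
  have hSclosed : ∀ i, IsClosed (S i) := by
    intro i
    have h1 : S i = (D i ∪ U i)ᶜ := by rw [← hUcompl i, compl_compl]
    rw [h1]
    exact ((hDo i).union (hUo i)).isClosed_compl
  have hfrbd : IsBounded (frontier Ω) := hbdd.closure.subset frontier_subset_closure
  have hScomp : ∀ i, IsCompact (S i) := fun i =>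
    isCompact_of_isClosed_isBounded (hSclosed i) (hfrbd.subset (hSsub i))
  -- the rest of the frontier, away from S i
  have hKcl : ∀ i : Fin (k+1), IsClosed (⋃ m ∈ {m : Fin (k+1) | m ≠ i}, S m) := fun i =>
    Set.Finite.isClosed_biUnion (Set.toFinite _) (fun m _ => hSclosed m)
  have hKdisj : ∀ i : Fin (k+1), Disjoint (S i) (⋃ m ∈ {m : Fin (k+1) | m ≠ i}, S m) := by
    intro i
    rw [Set.disjoint_left]
    intro x hx hxK
    rw [mem_iUnion₂] at hxK
    obtain ⟨m, hm, hxm⟩ := hxK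
    exact (hSdisj i m (Ne.symm hm)).le_bot ⟨hx, hxm⟩
  have hfrcover : ∀ i : Fin (k+1),
      frontier Ω ⊆ S i ∪ ⋃ m ∈ {m : Fin (k+1) | m ≠ i}, S m := by
    intro i
    rw [← hScover]
    apply iUnion_subset
    intro m x hx
    by_cases hmi : m = i
    · exact Or.inl (hmi ▸ hx)
    · exact Or.inr (mem_biUnion hmi hx)
  -- two-sided collars
  have hcollars : ∀ i, ∃ P Q W : Set (EuclideanSpace ℝ (Fin n)),
      IsOpen W ∧ S i ⊆ W ∧ W ⊆ P ∪ S i ∪ Q ∧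
      IsPreconnected P ∧ IsPreconnected Q ∧
      P ⊆ D i ∧ Q ⊆ U i ∧
      Disjoint P (⋃ m ∈ {m : Fin (k+1) | m ≠ i}, S m) ∧
      Disjoint Q (⋃ m ∈ {m : Fin (k+1) | m ≠ i}, S m) ∧
      S i ⊆ closure P ∧ S i ⊆ closure Q := by
    intro i
    obtain ⟨h, hh⟩ := htub i
    exact tube_side_collars (hScomp i) (hSconn i) (hDo i) (hDc i).nonempty
      (hUo i) (hUconn i).nonempty (hUdisj i) (hUcompl i) (hKcl i) (hKdisj i) h hh
  choose P Q W hWo hSW hWsub hPpc hQpc hPD hQU hPK hQK hSclP hSclQ using hcollars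
  -- closure identities
  have hclDsub : ∀ i, closure (D i) ⊆ D i ∪ S i := fun i =>
    aux_closure_subset (hUo i) (hUdisj i) (hUcompl i)
  have hclUsub : ∀ i, closure (U i) ⊆ U i ∪ S i := fun i =>
    aux_closure_subset (hDo i) (hUdisj i).symm (by rw [hUcompl i, union_comm])
  have hSclD : ∀ i, S i ⊆ closure (D i) := fun i =>
    (hSclP i).trans (closure_mono (hPD i))
  have hSclU : ∀ i, S i ⊆ closure (U i) := fun i =>
    (hSclQ i).trans (closure_mono (hQU i))
  have hclDeq : ∀ i, closure (D i) = D i ∪ S i := fun i =>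
    Subset.antisymm (hclDsub i) (union_subset subset_closure (hSclD i))
  -- basic disjointness
  have hDS : ∀ i, Disjoint (D i) (S i) := by
    intro i
    rw [Set.disjoint_left]
    intro x hx hxS
    have : x ∈ (S i)ᶜ := by rw [hUcompl i]; exact Or.inl hx
    exact this hxS
  have hUS : ∀ i, Disjoint (U i) (S i) := by
    intro i
    rw [Set.disjoint_left]
    intro x hx hxS
    have : x ∈ (S i)ᶜ := by rw [hUcompl i]; exact Or.inr hx
    exact this hxS
  have hΩfr : Disjoint Ω (frontier Ω) := by
    rw [hopen.frontier_eq]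
    exact disjoint_sdiff_right
  have hΩS : ∀ i, Disjoint Ω (S i) := fun i => hΩfr.mono_right (hSsub i)
  have hΩDU : ∀ i, Ω ⊆ D i ∪ U i := by
    intro i x hx
    rw [← hUcompl i]
    exact fun hxS => (hΩS i).le_bot ⟨hx, hxS⟩
  have hclosureΩ : closure Ω = Ω ∪ frontier Ω := by
    rw [hopen.frontier_eq, union_diff_cancel subset_closure]
  -- preconnected sets avoiding the frontier and meeting Ω lie in Ω
  have habs : ∀ A : Set (EuclideanSpace ℝ (Fin n)), IsPreconnected A →
      Disjoint A (frontier Ω) → (A ∩ Ω).Nonempty → A ⊆ Ω := by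
    intro A hA hAfr hne
    apply hA.subset_left_of_subset_union hopen isClosed_closure.isOpen_compl
      (disjoint_compl_right.mono_left subset_closure) _ hne
    intro x hx
    by_cases hxc : x ∈ closure Ω
    · rw [hclosureΩ] at hxc
      rcases hxc with hxΩ | hxfr
      · exact Or.inl hxΩ
      · exact absurd hxfr (fun hh => hAfr.le_bot ⟨hx, hh⟩)
    · exact Or.inr hxc
  have hPfr : ∀ i, Disjoint (P i) (frontier Ω) := by
    intro i
    rw [Set.disjoint_left]
    intro x hx hxfr
    rcases hfrcover i hxfr with hxS | hxK
    · exact (hDS i).le_bot ⟨hPD i hx, hxS⟩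
    · exact (hPK i).le_bot ⟨hx, hxK⟩
  have hQfr : ∀ i, Disjoint (Q i) (frontier Ω) := by
    intro i
    rw [Set.disjoint_left]
    intro x hx hxfr
    rcases hfrcover i hxfr with hxS | hxK
    · exact (hUS i).le_bot ⟨hQU i hx, hxS⟩
    · exact (hQK i).le_bot ⟨hx, hxK⟩
  -- the two-sided dichotomy for Ω at each boundary component
  have hΩside : ∀ i, (Ω ⊆ D i ∧ P i ⊆ Ω) ∨ (Ω ⊆ U i ∧ Q i ⊆ Ω) := by
    intro i
    obtain ⟨x₀, hx₀⟩ := (hSconn i).nonempty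
    have hx₀cl : x₀ ∈ closure Ω := frontier_subset_closure (hSsub i hx₀)
    obtain ⟨y, hyW, hyΩ⟩ := (_root_.mem_closure_iff.mp hx₀cl) (W i) (hWo i) (hSW i hx₀)
    rcases hWsub i hyW with (hyP | hyS) | hyQ
    · left
      refine ⟨?_, habs _ (hPpc i) (hPfr i) ⟨y, hyP, hyΩ⟩⟩
      exact hconn.isPreconnected.subset_left_of_subset_union (hDo i) (hUo i)
        (hUdisj i) (hΩDU i) ⟨y, hyΩ, hPD i hyP⟩
    · exact absurd hyS (fun hh => (hΩS i).le_bot ⟨hyΩ, hh⟩)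
    · right
      refine ⟨?_, habs _ (hQpc i) (hQfr i) ⟨y, hyQ, hyΩ⟩⟩
      exact hconn.isPreconnected.subset_left_of_subset_union (hUo i) (hDo i)
        (hUdisj i).symm (fun x hx => ((hΩDU i hx).elim Or.inr Or.inl)) ⟨y, hyΩ, hQU i hyQ⟩
  -- existence of the outer component
  have hex : ∃ j, Ω ⊆ D j := by
    by_contra hno
    push_neg at hno
    have hQΩ : ∀ i, Q i ⊆ Ω := by
      intro i
      rcases hΩside i with ⟨h1, _⟩ | ⟨_, h2⟩
      · exact absurd h1 (fun hh => hno i hh)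
      · exact h2
    set B := Ω ∪ ⋃ i, closure (D i) with hBdef
    have hclDB : ∀ i, closure (D i) ⊆ B := fun i =>
      (subset_iUnion (fun i => closure (D i)) i).trans subset_union_right
    have hBo : IsOpen B := by
      rw [isOpen_iff_forall_mem_open]
      intro x hx
      rcases hx with hxΩ | hxD
      · exact ⟨Ω, subset_union_left, hopen, hxΩ⟩
      · rw [mem_iUnion] at hxD
        obtain ⟨i, hxi⟩ := hxD
        rw [hclDeq i] at hxi
        rcases hxi with hxDi | hxSi
        · exact ⟨D i, subset_closure.trans (hclDB i), hDo i, hxDi⟩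
        · refine ⟨W i, ?_, hWo i, hSW i hxSi⟩
          intro y hy
          rcases hWsub i hy with (hyP | hyS) | hyQ
          · exact hclDB i (subset_closure (hPD i hyP))
          · exact hclDB i (hSclD i hyS)
          · exact Or.inl (hQΩ i hyQ)
    have hBc : IsClosed B := by
      apply isClosed_of_closure_subset
      rw [hBdef, closure_union]
      apply union_subset
      · rw [hclosureΩ]
        apply union_subset (fun x hx => Or.inl hx)
        rw [← hScover]
        exact iUnion_subset fun i => (hSclD i).trans (hclDB i)
      · rw [(isClosed_iUnion_of_finite (fun i => isClosed_closure)).closure_eq]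
        exact subset_union_right
    have hBuniv : B = univ := IsClopen.eq_univ ⟨hBc, hBo⟩ (hΩne.mono subset_union_left)
    have hBbd : IsBounded B := by
      apply hbdd.union
      exact isBounded_iUnion.mpr (fun i => (hDb i).closure)
    rw [hBuniv] at hBbd
    exact huniv hBbd
  obtain ⟨istar, hΩD⟩ := hex
  -- S i ⊆ D istar for i ≠ istar
  have hSsubD : ∀ i, i ≠ istar → S i ⊆ D istar := by
    intro i hi x hx
    have hxcl : x ∈ closure Ω := frontier_subset_closure (hSsub i hx)
    rcases ((closure_mono hΩD).trans (hclDsub istar)) hxcl with hd | hs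
    · exact hd
    · exact ((hSdisj i istar hi).le_bot ⟨hx, hs⟩).elim
  -- Ω lies in the unbounded side of every other component
  have hΩU : ∀ i, i ≠ istar → Ω ⊆ U i := by
    intro i hi
    rcases hΩside i with ⟨hΩDi, _⟩ | ⟨h1, _⟩
    swap
    · exact h1
    exfalso
    have hSstarDi : S istar ⊆ D i := by
      intro x hx
      have hxcl : x ∈ closure Ω := frontier_subset_closure (hSsub istar hx)
      rcases ((closure_mono hΩDi).trans (hclDsub i)) hxcl with hd | hs
      · exact hd
      · exact ((hSdisj istar i (Ne.symm hi)).le_bot ⟨hx, hs⟩).elim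
    have hUisub : U i ⊆ D istar ∪ U istar := by
      intro x hx
      rw [← hUcompl istar]
      exact fun hxS => (hUdisj i).le_bot ⟨hSstarDi hxS, hx⟩
    have hUiU : U i ⊆ U istar := by
      by_cases hne : (U i ∩ U istar).Nonempty
      · exact (hUconn i).isPreconnected.subset_left_of_subset_union (hUo istar)
          (hDo istar) (hUdisj istar).symm
          (fun x hx => ((hUisub hx).elim Or.inr Or.inl)) hne
      · exfalso
        have hsub : U i ⊆ D istar :=
          fun x hx => (hUisub hx).resolve_right (fun h => hne ⟨x, hx, h⟩)
        exact hUunb i ((hDb istar).subset hsub)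
    have hSiU : S i ⊆ U istar ∪ S istar :=
      (hSclU i).trans ((closure_mono hUiU).trans (hclUsub istar))
    obtain ⟨x, hx⟩ := (hSconn i).nonempty
    have hxD : x ∈ D istar := hSsubD i hi hx
    rcases hSiU hx with hu | hs
    · exact (hUdisj istar).le_bot ⟨hxD, hu⟩
    · exact (hDS istar).le_bot ⟨hxD, hs⟩
  have hQΩ' : ∀ i, i ≠ istar → Q i ⊆ Ω := by
    intro i hi
    rcases hΩside i with ⟨h1, _⟩ | ⟨_, h2⟩
    · exfalso
      obtain ⟨x, hx⟩ := hΩne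
      exact (hUdisj i).le_bot ⟨h1 hx, hΩU i hi hx⟩
    · exact h2
  have hSsubU : ∀ i j, i ≠ istar → j ≠ i → S j ⊆ U i := by
    intro i j hi hj x hx
    have hxcl : x ∈ closure Ω := frontier_subset_closure (hSsub j hx)
    rcases ((closure_mono (hΩU i hi)).trans (hclUsub i)) hxcl with hu | hs
    · exact hu
    · exact ((hSdisj j i hj).le_bot ⟨hx, hs⟩).elim
  have hDsubGen : ∀ i j, i ≠ istar → j ≠ istar → j ≠ i → closure (D j) ⊆ U i := by
    intro i j hi hj hji
    have hSjU : S j ⊆ U i := hSsubU i j hi hji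
    have hDjsub : D j ⊆ D i ∪ U i := by
      intro x hx
      rw [← hUcompl i]
      intro hxS
      exact (hUdisj j).le_bot ⟨hx, hSsubU j i hj (Ne.symm hji) hxS⟩
    have hDjUi : D j ⊆ U i := by
      by_cases hne : (D j ∩ D i).Nonempty
      · exfalso
        have hsub : D j ⊆ D i := (hDc j).isPreconnected.subset_left_of_subset_union
          (hDo i) (hUo i) (hUdisj i) hDjsub hne
        obtain ⟨x, hx⟩ := (hSconn j).nonempty
        have hx' : x ∈ D i ∪ S i := (hclDsub i) ((closure_mono hsub) (hSclD j hx))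
        rcases hx' with hd | hs
        · exact (hUdisj i).le_bot ⟨hd, hSjU hx⟩
        · exact (hUS i).le_bot ⟨hSjU hx, hs⟩
      · exact fun x hx => (hDjsub hx).resolve_left (fun h => hne ⟨x, hx, h⟩)
    rw [hclDeq j]
    exact union_subset hDjUi hSjU
  refine ⟨istar, hΩD, ?_, ?_, ?_⟩
  · -- pairwise disjoint closures
    intro i j hi hj hij
    have h1 : closure (D j) ⊆ U i := hDsubGen i j hi hj (Ne.symm hij)
    rw [hclDeq i]
    exact (disjoint_union_left.mpr ⟨hUdisj i, (hUS i).symm⟩).mono_right h1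
  · -- closures contained in D istar
    intro i hi
    have hSiD : S i ⊆ D istar := hSsubD i hi
    have hDisub : D i ⊆ D istar ∪ U istar := by
      intro x hx
      rw [← hUcompl istar]
      intro hxS
      exact (hUdisj i).le_bot ⟨hx, hSsubU i istar hi (Ne.symm hi) hxS⟩
    have hDiD : D i ⊆ D istar := by
      by_cases hne : (D i ∩ D istar).Nonempty
      · exact (hDc i).isPreconnected.subset_left_of_subset_union (hDo istar)
          (hUo istar) (hUdisj istar) hDisub hne
      · exfalso
        have hsub : D i ⊆ U istar :=
          fun x hx => (hDisub hx).resolve_left (fun h => hne ⟨x, hx, h⟩)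
        obtain ⟨x, hx⟩ := (hSconn i).nonempty
        have hx' : x ∈ U istar ∪ S istar :=
          (hclUsub istar) ((closure_mono hsub) (hSclD i hx))
        rcases hx' with hu | hs
        · exact (hUdisj istar).le_bot ⟨hSiD hx, hu⟩
        · exact (hDS istar).le_bot ⟨hSiD hx, hs⟩
    rw [hclDeq i]
    exact union_subset hDiD hSiD
  · -- the final identity
    have hsub1 : Ω ⊆ D istar \ ⋃ i ∈ {i : Fin (k+1) | i ≠ istar}, closure (D i) := by
      intro x hx
      refine ⟨hΩD hx, ?_⟩
      intro hmem
      rw [mem_iUnion₂] at hmem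
      obtain ⟨i, hi, hxi⟩ := hmem
      have hxU : x ∈ U i := hΩU i hi hx
      rcases (hclDsub i) hxi with hd | hs
      · exact (hUdisj i).le_bot ⟨hd, hxU⟩
      · exact (hUS i).le_bot ⟨hxU, hs⟩
    have hsub2 : D istar ⊆ Ω ∪ ⋃ i ∈ {i : Fin (k+1) | i ≠ istar}, closure (D i) := by
      have hclB : IsClosed (⋃ i ∈ {i : Fin (k+1) | i ≠ istar}, closure (D i)) :=
        Set.Finite.isClosed_biUnion (Set.toFinite _) (fun i _ => isClosed_closure)
      have hGo : IsOpen ((closure Ω ∪ ⋃ i ∈ {i : Fin (k+1) | i ≠ istar}, closure (D i))ᶜ) :=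
        (isClosed_closure.union hclB).isOpen_compl
      have hFo : IsOpen (Ω ∪ ⋃ i ∈ {i : Fin (k+1) | i ≠ istar}, closure (D i)) := by
        rw [isOpen_iff_forall_mem_open]
        intro x hx
        rcases hx with hxΩ | hxD
        · exact ⟨Ω, subset_union_left, hopen, hxΩ⟩
        · rw [mem_iUnion₂] at hxD
          obtain ⟨i, hi, hxi⟩ := hxD
          have hsubF : closure (D i) ⊆
              Ω ∪ ⋃ i ∈ {i : Fin (k+1) | i ≠ istar}, closure (D i) :=
            fun y hy => Or.inr (mem_biUnion hi hy)
          rw [hclDeq i] at hxi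
          rcases hxi with hxDi | hxSi
          · exact ⟨D i, subset_closure.trans hsubF, hDo i, hxDi⟩
          · refine ⟨W i, ?_, hWo i, hSW i hxSi⟩
            intro y hy
            rcases hWsub i hy with (hyP | hyS) | hyQ
            · exact hsubF (subset_closure (hPD i hyP))
            · exact hsubF (hSclD i hyS)
            · exact Or.inl (hQΩ' i hi hyQ)
      have hdisjFG : Disjoint
          (Ω ∪ ⋃ i ∈ {i : Fin (k+1) | i ≠ istar}, closure (D i))
          ((closure Ω ∪ ⋃ i ∈ {i : Fin (k+1) | i ≠ istar}, closure (D i))ᶜ) :=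
        disjoint_compl_right.mono_left (union_subset_union_left _ subset_closure)
      have hDsubFG : D istar ⊆
          (Ω ∪ ⋃ i ∈ {i : Fin (k+1) | i ≠ istar}, closure (D i)) ∪
          ((closure Ω ∪ ⋃ i ∈ {i : Fin (k+1) | i ≠ istar}, closure (D i))ᶜ) := by
        intro x hx
        by_cases hxG : x ∈ (closure Ω ∪ ⋃ i ∈ {i : Fin (k+1) | i ≠ istar}, closure (D i))ᶜ
        · exact Or.inr hxG
        · left
          rw [mem_compl_iff, not_not] at hxG
          rcases hxG with hxcl | hxB
          · rw [hclosureΩ] at hxcl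
            rcases hxcl with hxΩ | hxfr
            · exact Or.inl hxΩ
            · rw [← hScover, mem_iUnion] at hxfr
              obtain ⟨m, hxm⟩ := hxfr
              have hmne : m ≠ istar := fun he =>
                (hDS istar).le_bot ⟨hx, he ▸ hxm⟩
              exact Or.inr (mem_biUnion hmne (hSclD m hxm))
          · exact Or.inr hxB
      obtain ⟨x₀, hx₀⟩ := hΩne
      exact (hDc istar).isPreconnected.subset_left_of_subset_union hFo hGo hdisjFG
        hDsubFG ⟨x₀, hΩD hx₀, Or.inl hx₀⟩
    apply Subset.antisymm hsub1
    intro x hx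
    rcases hsub2 hx.1 with hxΩ | hxB
    · exact hxΩ
    · exact absurd hxB hx.2
end

section
/- Let n ≥ 1, let Ω ⊆ ℝⁿ be a bounded measurable set equipped with the Lebesgue measure, let u : ℝⁿ → ℝ be differentiable with bounded gradient ∇u that is moreover Lipschitz continuous on ℝⁿ, and let Z be a closed linear subspace of L²(Ω; ℝ) (for instance finite-dimensional). On the Banach space C_b(Ω; ℝⁿ) of bounded continuous maps Φ : Ω → ℝⁿ with the supremum norm, define the distributed registration objective f(Φ) := min_{ζ∈Z} (1/2) ∫_Ω (u(Φ(x)) − ζ(x))² dx, and let ζ_Φ ∈ Z denote the L²(Ω)-orthogonal projection of x ↦ u(Φ(x)) onto Z (which realizes the minimum). Then f is Fréchet differentiable at every Φ ∈ C_b(Ω; ℝⁿ), with Fréchet derivative Df[Φ](h) = ∫_Ω (u(Φ(x)) − ζ_Φ(x)) · ∇u(Φ(x)) · h(x) dx. -/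
/-!
The objective factors as `f = q ∘ toLp ∘ N`, where `N Φ = u ∘ Φ` is the superposition operator on
`Ω →ᵇ ℝⁿ`, `toLp` is the bounded embedding of bounded continuous functions into `L²(Ω)` (bounded
because `Ω` has finite measure), and `q w = ½ ‖w - P w‖²` is half the squared distance to `Z`,
`P` being the orthogonal projection onto `Z`.

Since `∇u` is `K`-Lipschitz, the mean value inequality bounds the first-order Taylor remainder of `u`
by `K ‖v‖²`, uniformly in the base point; hence `N` is Fréchet differentiable for the sup norm, with
derivative `h ↦ ⟪∇u ∘ Φ, h⟫`. As `w - P w` is the projection onto `Zᗮ`, `q` is half a squared norm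
after a linear map, and its derivative is `⟪v - P v, ·⟫`. The chain rule gives the derivative of
`f`, and writing the `L²` inner product as an integral gives the formula.
-/

open MeasureTheory BoundedContinuousFunction
open scoped NNReal ENNReal

section Calculus

theorem hasFDerivAt_of_norm_remainder_le_sq {𝕜 E F : Type*} [NontriviallyNormedField 𝕜]
    [NormedAddCommGroup E] [NormedSpace 𝕜 E] [NormedAddCommGroup F] [NormedSpace 𝕜 F]
    {f : E → F} {L : E →L[𝕜] F} {x : E} (C : ℝ)
    (hC : ∀ v, ‖f (x + v) - f x - L v‖ ≤ C * ‖v‖ ^ 2) : HasFDerivAt f L x := by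
  rw [hasFDerivAt_iff_isLittleO_nhds_zero]
  refine (Asymptotics.IsBigO.of_bound C (Filter.Eventually.of_forall fun v => ?_)).trans_isLittleO
    (Asymptotics.isLittleO_norm_pow_id one_lt_two)
  simpa using hC v

variable {E F : Type*} [NormedAddCommGroup E] [NormedSpace ℝ E]
  [NormedAddCommGroup F] [NormedSpace ℝ F]

theorem norm_sub_sub_fderiv_le_of_lipschitzWith_fderiv {f : E → F} (hf : Differentiable ℝ f)
    {K : ℝ≥0} (hlip : LipschitzWith K (fderiv ℝ f)) (x v : E) :
    ‖f (x + v) - f x - fderiv ℝ f x v‖ ≤ K * ‖v‖ ^ 2 := by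
  have hderiv : ∀ y ∈ Metric.closedBall x ‖v‖, HasFDerivWithinAt (fun y => f y - fderiv ℝ f x y)
      (fderiv ℝ f y - fderiv ℝ f x) (Metric.closedBall x ‖v‖) y := fun y _ =>
    ((hf y).hasFDerivAt.sub (fderiv ℝ f x).hasFDerivAt).hasFDerivWithinAt
  have hbound : ∀ y ∈ Metric.closedBall x ‖v‖, ‖fderiv ℝ f y - fderiv ℝ f x‖ ≤ K * ‖v‖ :=
    fun y hy => by
      rw [← dist_eq_norm]
      exact hlip.dist_le_mul_of_le (Metric.mem_closedBall.1 hy)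
  have hxv : x + v ∈ Metric.closedBall x ‖v‖ := by simp [dist_eq_norm]
  have hmvt := (convex_closedBall x ‖v‖).norm_image_sub_le_of_norm_hasFDerivWithin_le hderiv
    hbound (Metric.mem_closedBall_self (norm_nonneg v)) hxv
  calc ‖f (x + v) - f x - fderiv ℝ f x v‖
      = ‖f (x + v) - fderiv ℝ f x (x + v) - (f x - fderiv ℝ f x x)‖ := by
        rw [map_add]; abel_nf
    _ ≤ K * ‖v‖ * ‖x + v - x‖ := hmvt
    _ = K * ‖v‖ ^ 2 := by rw [add_sub_cancel_left]; ring

theorem lipschitzWith_fderiv_of_lipschitzWith_gradient {E : Type*} [NormedAddCommGroup E]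
    [InnerProductSpace ℝ E] [CompleteSpace E] {u : E → ℝ} {K : ℝ≥0}
    (hlip : LipschitzWith K (gradient u)) : LipschitzWith K (fderiv ℝ u) := by
  simpa [toDual_comp_gradient] using (InnerProductSpace.toDual ℝ E).lipschitz.comp hlip

end Calculus

namespace Submodule

variable {E : Type*} [NormedAddCommGroup E] [InnerProductSpace ℝ E] (Z : Submodule ℝ E)
  [Z.HasOrthogonalProjection]

theorem norm_sub_starProjection_le (v : E) {z : E} (hz : z ∈ Z) :
    ‖v - Z.starProjection v‖ ≤ ‖v - z‖ := by
  rw [starProjection_minimal]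
  refine ciInf_le ⟨0, ?_⟩ (⟨z, hz⟩ : Z)
  rintro _ ⟨_, rfl⟩
  exact norm_nonneg _

theorem iInf_half_norm_sub_sq (v : E) :
    ⨅ z : Z, (1 / 2 : ℝ) * ‖v - z‖ ^ 2 = 1 / 2 * ‖v - Z.starProjection v‖ ^ 2 := by
  refine IsGLB.ciInf_eq (IsLeast.isGLB ⟨⟨⟨_, Z.starProjection_apply_mem v⟩, rfl⟩, ?_⟩)
  rintro _ ⟨z, rfl⟩
  dsimp only
  gcongr
  exact Z.norm_sub_starProjection_le v z.2

theorem hasFDerivAt_half_norm_sub_starProjection_sq (v : E) :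
    HasFDerivAt (fun w => (1 / 2 : ℝ) * ‖w - Z.starProjection w‖ ^ 2)
      (innerSL ℝ (v - Z.starProjection v)) v := by
  have h := (Zᗮ.starProjection.hasFDerivAt (x := v)).norm_sq.const_mul (1 / 2 : ℝ)
  simp only [starProjection_orthogonal_val] at h
  refine h.congr_fderiv (ContinuousLinearMap.ext fun w => ?_)
  have horth : inner ℝ (v - Z.starProjection v) (Z.starProjection w) = 0 :=
    inner_left_of_mem_orthogonal (Z.starProjection_apply_mem w)
      (Z.sub_starProjection_mem_orthogonal v)
  simp only [FunLike.coe_smul, Pi.smul_apply, ContinuousLinearMap.comp_apply,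
    innerSL_apply_apply, starProjection_orthogonal_val, inner_sub_right _ w, horth]
  ring

end Submodule

namespace BoundedContinuousFunction

section Superposition

variable {α β γ : Type*} [TopologicalSpace α] [PseudoMetricSpace β] [PseudoMetricSpace γ]

def compOfIsBounded (f : β → γ) (hf : Continuous f)
    (hb : ∀ s : Set β, Bornology.IsBounded s → Bornology.IsBounded (f '' s)) (Φ : α →ᵇ β) :
    α →ᵇ γ where
  toFun x := f (Φ x)
  continuous_toFun := hf.comp Φ.continuous
  map_bounded' :=
    Metric.isBounded_range_iff.1 <| (Set.range_comp f Φ).symm ▸ hb _ Φ.isBounded_range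

end Superposition

section PointwiseApplication

variable {α 𝕜 E F : Type*} [TopologicalSpace α] [NontriviallyNormedField 𝕜]
  [NormedAddCommGroup E] [NormedSpace 𝕜 E] [NormedAddCommGroup F] [NormedSpace 𝕜 F]

theorem norm_apply_apply_le (A : α →ᵇ (E →L[𝕜] F)) (h : α →ᵇ E) (x : α) :
    ‖A x (h x)‖ ≤ ‖A‖ * ‖h‖ :=
  (A x).le_of_opNorm_le_of_le (A.norm_coe_le_norm x) (h.norm_coe_le_norm x)

noncomputable def applyCLM (A : α →ᵇ (E →L[𝕜] F)) : (α →ᵇ E) →L[𝕜] (α →ᵇ F) :=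
  LinearMap.mkContinuous
    { toFun h := ofNormedAddCommGroup (fun x => A x (h x)) (A.continuous.clm_apply h.continuous)
        (‖A‖ * ‖h‖) (norm_apply_apply_le A h)
      map_add' h k := by ext; simp
      map_smul' c h := by ext; simp }
    ‖A‖ fun h => norm_ofNormedAddCommGroup_le _ (by positivity) (norm_apply_apply_le A h)

end PointwiseApplication

variable {α E F : Type*} [TopologicalSpace α] [NormedAddCommGroup E] [NormedSpace ℝ E]
  [NormedAddCommGroup F] [NormedSpace ℝ F]

theorem hasFDerivAt_compOfIsBounded {f : E → F} (hf : Differentiable ℝ f) {K : ℝ≥0}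
    (hlip : LipschitzWith K (fderiv ℝ f))
    (hb : ∀ s : Set E, Bornology.IsBounded s → Bornology.IsBounded (f '' s)) (Φ : α →ᵇ E) :
    HasFDerivAt (compOfIsBounded f hf.continuous hb) (applyCLM (comp (fderiv ℝ f) hlip Φ)) Φ :=
  hasFDerivAt_of_norm_remainder_le_sq K fun h => (norm_le (by positivity)).2 fun x => by
    calc ‖f (Φ x + h x) - f (Φ x) - fderiv ℝ f (Φ x) (h x)‖
        ≤ K * ‖h x‖ ^ 2 := norm_sub_sub_fderiv_le_of_lipschitzWith_fderiv hf hlip (Φ x) (h x)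
      _ ≤ K * ‖h‖ ^ 2 := by gcongr; exact h.norm_coe_le_norm x

end BoundedContinuousFunction

theorem isFiniteMeasure_comap_subtype_val {X : Type*} [MeasurableSpace X] {μ : Measure X}
    {s : Set X} (hs : μ s ≠ ∞) : IsFiniteMeasure (μ.comap (Subtype.val : s → X)) where
  measure_univ_lt_top :=
    (Measure.comap_apply_le _ _ MeasurableSet.univ.nullMeasurableSet).trans_lt <| by
      rwa [Set.image_univ, Subtype.range_coe, lt_top_iff_ne_top]

section L2

variable {α : Type*} [TopologicalSpace α] [MeasurableSpace α] [BorelSpace α] {μ : Measure α}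
  [IsFiniteMeasure μ]

theorem integral_sub_sq_eq_norm_toLp_sub_sq (g : α →ᵇ ℝ) (w : Lp ℝ 2 μ) :
    ∫ x, (g x - w x) ^ 2 ∂μ = ‖toLp 2 μ ℝ g - w‖ ^ 2 := by
  rw [← real_inner_self_eq_norm_sq, L2.inner_def]
  refine integral_congr_ae ?_
  filter_upwards [Lp.coeFn_sub (toLp 2 μ ℝ g) w, coeFn_toLp 2 μ ℝ g] with x hsub hg
  rw [hsub, Pi.sub_apply, hg, RCLike.inner_apply, conj_trivial, sq]

theorem inner_toLp_sub_toLp_eq_integral (g k : α →ᵇ ℝ) (w : Lp ℝ 2 μ) :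
    inner ℝ (toLp 2 μ ℝ g - w) (toLp 2 μ ℝ k) = ∫ x, (g x - w x) * k x ∂μ := by
  rw [L2.inner_def]
  refine integral_congr_ae ?_
  filter_upwards [Lp.coeFn_sub (toLp 2 μ ℝ g) w, coeFn_toLp 2 μ ℝ g, coeFn_toLp 2 μ ℝ k]
    with x hsub hg hk
  rw [hsub, Pi.sub_apply, hg, hk, RCLike.inner_apply, conj_trivial, mul_comm]

end L2

theorem distributed_objective_frechet_differentiable_general
    (n : ℕ)
    (Ω : Set (EuclideanSpace ℝ (Fin n)))
    (hbdd : Bornology.IsBounded Ω)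
    (u : EuclideanSpace ℝ (Fin n) → ℝ)
    (hu : Differentiable ℝ u)
    (K : NNReal) (hgrad_lip : LipschitzWith K (gradient u))
    (μ : Measure Ω) (hμ : μ = Measure.comap Subtype.val MeasureTheory.volume)
    (Z : Submodule ℝ (Lp ℝ 2 μ)) (hZ : IsClosed (Z : Set (Lp ℝ 2 μ)))
    (f : (Ω →ᵇ EuclideanSpace ℝ (Fin n)) → ℝ)
    (hf : ∀ Φ : Ω →ᵇ EuclideanSpace ℝ (Fin n),
      f Φ = ⨅ ζ : Z, (1/2) * ∫ x, (u (Φ x) - (ζ : Lp ℝ 2 μ) x) ^ 2 ∂μ) :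
    ∀ Φ : Ω →ᵇ EuclideanSpace ℝ (Fin n),
      ∃ ζΦ : Lp ℝ 2 μ, ζΦ ∈ Z ∧
        (∀ ζ ∈ Z, ∫ x, (u (Φ x) - ζΦ x) ^ 2 ∂μ ≤
          ∫ x, (u (Φ x) - (ζ : Lp ℝ 2 μ) x) ^ 2 ∂μ) ∧
        f Φ = (1/2) * ∫ x, (u (Φ x) - ζΦ x) ^ 2 ∂μ ∧
        ∃ L : (Ω →ᵇ EuclideanSpace ℝ (Fin n)) →L[ℝ] ℝ,
          HasFDerivAt f L Φ ∧
          ∀ h : Ω →ᵇ EuclideanSpace ℝ (Fin n),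
            L h = ∫ x, (u (Φ x) - ζΦ x) *
              (inner ℝ (gradient u (Φ x)) (h x) : ℝ) ∂μ := by
  intro Φ
  have : IsFiniteMeasure μ := hμ ▸ isFiniteMeasure_comap_subtype_val hbdd.measure_lt_top.ne
  have : CompleteSpace Z := hZ.completeSpace_coe
  have hb : ∀ s, Bornology.IsBounded s → Bornology.IsBounded (u '' s) := fun s hs =>
    (hs.isCompact_closure.image hu.continuous).isBounded.subset (Set.image_mono subset_closure)
  have hlip := lipschitzWith_fderiv_of_lipschitzWith_gradient hgrad_lip
  set G := toLp 2 μ ℝ ∘ compOfIsBounded u hu.continuous hb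
  have hfG : f = (fun w => (1 / 2 : ℝ) * ‖w - Z.starProjection w‖ ^ 2) ∘ G := by
    funext Ψ
    rw [hf, Function.comp_apply, ← Z.iInf_half_norm_sub_sq]
    simp_rw [G, Function.comp_apply, ← integral_sub_sq_eq_norm_toLp_sub_sq]
    rfl
  have hint : ∀ w : Lp ℝ 2 μ, ∫ x, (u (Φ x) - w x) ^ 2 ∂μ = ‖G Φ - w‖ ^ 2 :=
    integral_sub_sq_eq_norm_toLp_sub_sq (compOfIsBounded u hu.continuous hb Φ)
  refine ⟨Z.starProjection (G Φ), Z.starProjection_apply_mem _, fun ζ hζ => ?_, ?_, _,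
    hfG ▸ (Z.hasFDerivAt_half_norm_sub_starProjection_sq (G Φ)).comp Φ
      ((toLp 2 μ ℝ).hasFDerivAt.comp Φ (hasFDerivAt_compOfIsBounded hu hlip hb Φ)), fun h => ?_⟩
  · rw [hint, hint]
    gcongr
    exact Z.norm_sub_starProjection_le _ hζ
  · rw [hfG, hint]
    rfl
  · refine (inner_toLp_sub_toLp_eq_integral (compOfIsBounded u hu.continuous hb Φ) _ _).trans ?_
    simp_rw [inner_gradient_left]
    rfl

/-- The distributed registration objective
`f Φ = min_{ζ ∈ Z} (1/2) ∫_Ω (u (Φ x) - ζ x)² dx` on the Banach space of bounded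
continuous maps `Ω →ᵇ ℝⁿ` is Fréchet differentiable at every `Φ`, with the minimum
realized by the `L²(Ω)`-orthogonal projection `ζ_Φ` of `x ↦ u (Φ x)` onto the closed
subspace `Z`, and derivative `h ↦ ∫_Ω (u (Φ x) - ζ_Φ x) ⟪∇u (Φ x), h x⟫ dx`. -/
theorem distributed_objective_frechet_differentiable
    (n : ℕ) (hn : 1 ≤ n)
    (Ω : Set (EuclideanSpace ℝ (Fin n)))
    (hmeas : MeasurableSet Ω) (hbdd : Bornology.IsBounded Ω)
    (u : EuclideanSpace ℝ (Fin n) → ℝ)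
    (hu : Differentiable ℝ u)
    (C : ℝ) (hgrad_bdd : ∀ x, ‖gradient u x‖ ≤ C)
    (K : NNReal) (hgrad_lip : LipschitzWith K (gradient u))
    (μ : Measure Ω) (hμ : μ = Measure.comap Subtype.val MeasureTheory.volume)
    (Z : Submodule ℝ (Lp ℝ 2 μ)) (hZ : IsClosed (Z : Set (Lp ℝ 2 μ)))
    (f : (Ω →ᵇ EuclideanSpace ℝ (Fin n)) → ℝ)
    (hf : ∀ Φ : Ω →ᵇ EuclideanSpace ℝ (Fin n),
      f Φ = ⨅ ζ : Z, (1/2) * ∫ x, (u (Φ x) - (ζ : Lp ℝ 2 μ) x) ^ 2 ∂μ) :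
    ∀ Φ : Ω →ᵇ EuclideanSpace ℝ (Fin n),
      ∃ ζΦ : Lp ℝ 2 μ, ζΦ ∈ Z ∧
        (∀ ζ ∈ Z, ∫ x, (u (Φ x) - ζΦ x) ^ 2 ∂μ ≤
          ∫ x, (u (Φ x) - (ζ : Lp ℝ 2 μ) x) ^ 2 ∂μ) ∧
        f Φ = (1/2) * ∫ x, (u (Φ x) - ζΦ x) ^ 2 ∂μ ∧
        ∃ L : (Ω →ᵇ EuclideanSpace ℝ (Fin n)) →L[ℝ] ℝ,
          HasFDerivAt f L Φ ∧
          ∀ h : Ω →ᵇ EuclideanSpace ℝ (Fin n),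
            L h = ∫ x, (u (Φ x) - ζΦ x) *
              (inner ℝ (gradient u (Φ x)) (h x) : ℝ) ∂μ :=
  distributed_objective_frechet_differentiable_general n Ω hbdd u hu K hgrad_lip μ hμ Z hZ f hf
end
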